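/- arXiv:2501.13736 — 4 statements merged into one kernel-verified Lean document; each statement's English description precedes it below -/
import Mathlib

section
/- For every discrete random variable X, H(X) ≤ Λ(X) + 2√(Λ(X)·(log₂ e)/e). -/
open Real

noncomputable def lamt (i : ℕ) : ℝ :=
  ((i : ℝ) + 1) * Real.logb 2 ((i : ℝ) + 1) - (i : ℝ) * Real.logb 2 (i : ℝ)

namespace S11

noncomputable def Rr (i : ℕ) : ℝ := (i:ℝ)^i / ((i:ℝ)+1)^(i+1)

lemma Rr_pos (i : ℕ) : 0 < Rr i := by
  cases i with
  | zero => norm_num [Rr]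
  | succ n =>
    apply div_pos (pow_pos (by positivity) _) (pow_pos (by positivity) _)

lemma lamt_zero : lamt 0 = 0 := by simp [lamt]

lemma lamt_eq_neg_logb (i : ℕ) : lamt i = -Real.logb 2 (Rr i) := by
  have h1 : ((i:ℝ))^i ≠ 0 := by
    cases i with
    | zero => norm_num
    | succ n => positivity
  have h2 : (((i:ℝ))+1)^(i+1) ≠ 0 := by positivity
  rw [Rr, Real.logb_div h1 h2]
  rw [Real.logb_pow, Real.logb_pow]
  simp only [lamt]
  push_cast
  ring

lemma two_rpow_neg_lamt (i : ℕ) : (2:ℝ) ^ (-lamt i) = Rr i := by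
  rw [lamt_eq_neg_logb, neg_neg]
  exact Real.rpow_logb (by norm_num) (by norm_num) (Rr_pos i)

lemma two_mul_le (i : ℕ) (hi : 1 ≤ i) : 2 * ((i:ℝ))^i ≤ ((i:ℝ)+1)^i := by
  have hi' : (1:ℝ) ≤ (i:ℝ) := by exact_mod_cast hi
  have hipos : (0:ℝ) < i := by linarith
  have hb : (2:ℝ) ≤ (1 + 1/(i:ℝ))^i := by
    have h0 : (-2:ℝ) ≤ 1/(i:ℝ) := by
      have : (0:ℝ) ≤ 1/(i:ℝ) := by positivity
      linarith
    have h2 := one_add_mul_le_pow h0 i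
    have h3 : (i:ℝ) * (1/(i:ℝ)) = 1 := by field_simp
    rw [h3] at h2
    linarith
  calc 2 * ((i:ℝ))^i ≤ (1 + 1/(i:ℝ))^i * ((i:ℝ))^i := by
        apply mul_le_mul_of_nonneg_right hb (by positivity)
  _ = ((1 + 1/(i:ℝ)) * (i:ℝ))^i := by rw [mul_pow]
  _ = ((i:ℝ)+1)^i := by
        congr 1
        field_simp

lemma Rr_le (i : ℕ) (hi : 1 ≤ i) : Rr i ≤ 1 / (2*((i:ℝ)+1)) := by
  have hipos : (0:ℝ) < i := by exact_mod_cast hi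
  rw [Rr, div_le_div_iff₀ (by positivity) (by positivity)]
  have : ((i:ℝ)+1)^(i+1) = ((i:ℝ)+1)^i * ((i:ℝ)+1) := by ring
  rw [this]
  have := two_mul_le i hi
  nlinarith [pow_pos (show (0:ℝ) < (i:ℝ)+1 by linarith) i, pow_pos hipos i]

lemma Rr_le_quarter (i : ℕ) (hi : 1 ≤ i) : Rr i ≤ 1/4 := by
  have := Rr_le i hi
  have hi' : (1:ℝ) ≤ (i:ℝ) := by exact_mod_cast hi
  have : 1 / (2*((i:ℝ)+1)) ≤ 1/4 := by
    rw [div_le_div_iff₀ (by linarith) (by norm_num)]; linarith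
  linarith [Rr_le i hi]

lemma Rr_one : Rr 1 = 1/4 := by norm_num [Rr]
lemma Rr_two : Rr 2 = 4/27 := by norm_num [Rr]
lemma Rr_three : Rr 3 = 27/256 := by norm_num [Rr]
lemma Rr_four : Rr 4 = 256/3125 := by norm_num [Rr]

lemma lamt_ge_two (i : ℕ) (hi : 1 ≤ i) : 2 ≤ lamt i := by
  rw [lamt_eq_neg_logb, le_neg]
  have h : Real.logb 2 (Rr i) ≤ Real.logb 2 (1/4) := by
    apply Real.logb_le_logb_of_le (by norm_num) (Rr_pos i) (Rr_le_quarter i hi)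
  have h4 : Real.logb 2 (1/4 : ℝ) = -2 := by
    have he : (1/4 : ℝ) = (2:ℝ)^(-2 : ℝ) := by
      rw [show ((-2:ℝ)) = ((-2 : ℤ):ℝ) by norm_num, Real.rpow_intCast]
      norm_num
    rw [he, Real.logb_rpow (b := 2) (by norm_num) (by norm_num)]
  linarith

lemma lamt_nonneg (i : ℕ) : 0 ≤ lamt i := by
  cases Nat.eq_zero_or_pos i with
  | inl h => simp [h, lamt_zero]
  | inr h => linarith [lamt_ge_two i h]

/-! ### Pointwise entropy bounds -/

-- t * log (u/t) ≤ u - t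
lemma mul_log_div_le_sub {t u : ℝ} (ht : 0 ≤ t) (hu : 0 < u) :
    t * Real.log (u/t) ≤ u - t := by
  rcases eq_or_lt_of_le ht with h | h
  · simp [← h]; positivity
  · have hlog := Real.log_le_sub_one_of_pos (show 0 < u/t by positivity)
    calc t * Real.log (u/t) ≤ t * (u/t - 1) := by
          apply mul_le_mul_of_nonneg_left hlog ht
    _ = u - t := by field_simp

-- t * log (u/t) ≤ u * exp (-1)
lemma mul_log_div_le_exp {t u : ℝ} (ht : 0 ≤ t) (hu : 0 < u) :
    t * Real.log (u/t) ≤ u * Real.exp (-1) := by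
  have hu' : 0 < u * Real.exp (-1) := by positivity
  have h := mul_log_div_le_sub ht hu'
  rcases eq_or_lt_of_le ht with h0 | h0
  · simp [← h0]; positivity
  · have hlog : Real.log (u/t) = Real.log ((u * Real.exp (-1))/t) + 1 := by
      rw [show (u * Real.exp (-1))/t = (u/t) * Real.exp (-1) by ring,
        Real.log_mul (by positivity) (Real.exp_ne_zero _), Real.log_exp]
      ring
    nlinarith

lemma logb_e : Real.logb 2 (Real.exp 1) = 1 / Real.log 2 := by
  rw [Real.logb, Real.log_exp]

lemma key_ident {v : ℝ} (hv : 0 < v) (c : ℝ) :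
    -(v * Real.logb 2 v) - v * c = (v * Real.log ((2:ℝ)^(-c) / v)) / Real.log 2 := by
  have hlog2 : Real.log 2 ≠ 0 := by
    have := Real.log_two_gt_d9; linarith
  have hu : Real.log ((2:ℝ)^(-c)) = -c * Real.log 2 := Real.log_rpow (by norm_num) _
  rw [Real.log_div (by positivity) (ne_of_gt hv), hu, Real.logb]
  field_simp
  ring

lemma ent_term_A {v : ℝ} (hv : 0 ≤ v) (c : ℝ) :
    -(v * Real.logb 2 v) ≤ v * c
      + Real.logb 2 (Real.exp 1) * ((2:ℝ)^(-c) * Real.exp (-1)) := by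
  have hlog2 : 0 < Real.log 2 := by have := Real.log_two_gt_d9; linarith
  have hu : (0:ℝ) < (2:ℝ)^(-c) := by positivity
  rcases eq_or_lt_of_le hv with h0 | h0
  · rw [← h0]; rw [logb_e]
    simp only [neg_zero, zero_mul, mul_zero, neg_mul, zero_add]
    positivity
  · have h := mul_log_div_le_exp h0.le hu
    have hk := key_ident h0 c
    rw [logb_e]
    have h2 : v * Real.log ((2:ℝ)^(-c) / v) / Real.log 2
        ≤ ((2:ℝ)^(-c) * Real.exp (-1)) / Real.log 2 :=
      div_le_div_of_nonneg_right h hlog2.le |>.trans_eq rfl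
    have h3 : ((2:ℝ)^(-c) * Real.exp (-1)) / Real.log 2
        = 1 / Real.log 2 * ((2:ℝ)^(-c) * Real.exp (-1)) := by ring
    linarith

lemma ent_term_B {v : ℝ} (hv : 0 ≤ v) (c : ℝ) :
    -(v * Real.logb 2 v) ≤ v * c
      + Real.logb 2 (Real.exp 1) * ((2:ℝ)^(-c) - v) := by
  have hlog2 : 0 < Real.log 2 := by have := Real.log_two_gt_d9; linarith
  have hu : (0:ℝ) < (2:ℝ)^(-c) := by positivity
  rcases eq_or_lt_of_le hv with h0 | h0
  · rw [← h0]; rw [logb_e]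
    simp only [neg_zero, zero_mul, mul_zero, sub_zero, zero_add, neg_mul]
    positivity
  · have h := mul_log_div_le_sub h0.le hu
    have hk := key_ident h0 c
    rw [logb_e]
    have : (v * Real.log ((2:ℝ)^(-c) / v)) / Real.log 2 ≤ ((2:ℝ)^(-c) - v) / Real.log 2 :=
      div_le_div_of_nonneg_right h hlog2.le
    calc -(v * Real.logb 2 v) = v * c + (v * Real.log ((2:ℝ)^(-c) / v)) / Real.log 2 := by
          linarith [hk]
    _ ≤ v * c + ((2:ℝ)^(-c) - v) / Real.log 2 := by linarith
    _ = v * c + 1 / Real.log 2 * ((2:ℝ)^(-c) - v) := by ring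

/-! ### Tail bounds -/

lemma rpow_tail_term {lam : ℝ} (hl : 0 < lam) {x : ℝ} (hx : 1 ≤ x) :
    lam * (x+1) ^ (-(1+lam)) ≤ x ^ (-lam) - (x+1) ^ (-lam) := by
  have hx0 : (0:ℝ) < x := by linarith
  have hx1 : (0:ℝ) < x + 1 := by linarith
  set y : ℝ := (x+1)/x with hy
  have hy1 : 0 < y := by positivity
  have hlogy : 1/(x+1) ≤ Real.log y := by
    have hinv := Real.log_le_sub_one_of_pos (show 0 < y⁻¹ by positivity)
    rw [Real.log_inv] at hinv
    have : y⁻¹ = x/(x+1) := by rw [hy]; field_simp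
    rw [this] at hinv
    have : 1 - x/(x+1) = 1/(x+1) := by field_simp; ring
    linarith
  have hexp : 1 + lam * (1/(x+1)) ≤ y ^ lam := by
    rw [Real.rpow_def_of_pos hy1, mul_comm (Real.log y) lam]
    have h1 := Real.add_one_le_exp (lam * Real.log y)
    have h2 : lam * (1/(x+1)) ≤ lam * Real.log y :=
      mul_le_mul_of_nonneg_left hlogy hl.le
    linarith
  have hid : x ^ (-lam) = (x+1) ^ (-lam) * y ^ lam := by
    rw [hy, Real.div_rpow hx1.le hx0.le, Real.rpow_neg hx1.le, Real.rpow_neg hx0.le]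
    field_simp
  have hsplit : (x+1) ^ (-(1+lam)) = (x+1)⁻¹ * (x+1) ^ (-lam) := by
    rw [show -(1+lam) = -1 + -lam by ring, Real.rpow_add hx1, Real.rpow_neg_one]
  rw [hid, hsplit]
  have hpos : (0:ℝ) < (x+1) ^ (-lam) := Real.rpow_pos_of_pos hx1 _
  have := mul_le_mul_of_nonneg_left hexp hpos.le
  calc lam * ((x+1)⁻¹ * (x+1) ^ (-lam)) = (x+1)^(-lam) * (1 + lam * (1/(x+1))) - (x+1)^(-lam) := by
        field_simp; ring
  _ ≤ (x+1)^(-lam) * y ^ lam - (x+1) ^ (-lam) := by linarith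

lemma summable_shift_rpow {s : ℝ} (hs : 1 < s) (k : ℕ) :
    Summable (fun i : ℕ => ((i + k : ℕ):ℝ) ^ (-s)) := by
  have h0 : Summable (fun n : ℕ => ((n:ℝ) ^ s)⁻¹) := Real.summable_nat_rpow_inv.2 hs
  have h1 : Summable (fun n : ℕ => ((n:ℝ)) ^ (-s)) := by
    apply h0.congr
    intro n
    rw [Real.rpow_neg (by positivity)]
  exact (summable_nat_add_iff k).2 h1

lemma tail_sum_le {lam : ℝ} (hl : 0 < lam) (N : ℕ) (hN : 1 ≤ N) :
    ∑' i : ℕ, ((i + N + 1 : ℕ):ℝ) ^ (-(1+lam)) ≤ (N:ℝ)^(-lam) / lam := by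
  set f : ℕ → ℝ := fun i => ((i + N : ℕ):ℝ) ^ (-lam) with hf
  apply Real.tsum_le_of_sum_range_le (fun n => by positivity)
  intro n
  have hterm : ∀ i : ℕ, ((i + N + 1 : ℕ):ℝ) ^ (-(1+lam)) ≤ (f i - f (i+1)) / lam := by
    intro i
    have hx : (1:ℝ) ≤ ((i + N : ℕ):ℝ) := by
      have h1 : 1 ≤ i + N := by omega
      exact_mod_cast h1
    have h := rpow_tail_term hl hx
    have hcast : ((i + N : ℕ):ℝ) + 1 = ((i + N + 1 : ℕ):ℝ) := by push_cast; ring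
    rw [hcast] at h
    rw [le_div_iff₀ hl]
    have hfi : f i = ((i + N : ℕ):ℝ) ^ (-lam) := rfl
    have hfi1 : f (i+1) = ((i + N + 1 : ℕ):ℝ) ^ (-lam) := by
      show ((i + 1 + N : ℕ):ℝ) ^ (-lam) = _
      have h2 : i + 1 + N = i + N + 1 := by omega
      rw [h2]
    rw [hfi, hfi1, mul_comm]
    linarith
  calc ∑ i ∈ Finset.range n, ((i + N + 1 : ℕ):ℝ) ^ (-(1+lam))
      ≤ ∑ i ∈ Finset.range n, (f i - f (i+1)) / lam :=
        Finset.sum_le_sum (fun i _ => hterm i)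
  _ = (∑ i ∈ Finset.range n, (f i - f (i+1))) / lam := by rw [Finset.sum_div]
  _ = (f 0 - f n) / lam := by rw [Finset.sum_range_sub' f n]
  _ ≤ f 0 / lam := by
      apply div_le_div_of_nonneg_right _ hl.le
      have : 0 ≤ f n := by rw [hf]; positivity
      linarith
  _ = (N:ℝ)^(-lam) / lam := by rw [hf]; norm_num

noncomputable def Tf (s : ℝ) : ℝ := ∑' i : ℕ, Rr (i+1) ^ s

lemma Rr_rpow_le {k : ℕ} (hk : 1 ≤ k) {s : ℝ} (hs : 0 ≤ s) :
    Rr k ^ s ≤ (1/2:ℝ)^s * ((k+1 : ℕ):ℝ)^(-s) := by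
  have h1 : Rr k ^ s ≤ (1/(2*((k:ℝ)+1)))^s :=
    Real.rpow_le_rpow (Rr_pos k).le (Rr_le k hk) hs
  have h2 : (1/(2*((k:ℝ)+1)):ℝ) = (1/2) * (((k+1:ℕ)):ℝ)⁻¹ := by push_cast; field_simp
  rw [h2] at h1
  rw [Real.mul_rpow (by norm_num) (by positivity)] at h1
  rwa [Real.inv_rpow (by positivity), ← Real.rpow_neg (by positivity)] at h1

lemma summable_Rr {lam : ℝ} (hl : 0 < lam) (k : ℕ) :
    Summable (fun i : ℕ => Rr (i + k + 1) ^ (1+lam)) := by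
  apply Summable.of_nonneg_of_le (fun i => Real.rpow_nonneg (Rr_pos _).le _)
    (fun i => ?_) (((summable_shift_rpow (by linarith : (1:ℝ) < 1+lam) (k+2)).mul_left ((1/2:ℝ)^(1+lam))))
  have h := Rr_rpow_le (k := i + k + 1) (by omega) (show (0:ℝ) ≤ 1+lam by linarith)
  have h2 : i + k + 1 + 1 = i + (k + 2) := by omega
  rw [h2] at h
  exact h

lemma tail_Rr_le {lam : ℝ} (hl : 0 < lam) (n : ℕ) (hn : 1 ≤ n) :
    ∑' i : ℕ, Rr (i + n + 1) ^ (1+lam)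
      ≤ (1/2:ℝ)^(1+lam) * (((n+1 : ℕ)):ℝ)^(-lam) / lam := by
  have hsum1 := summable_shift_rpow (show (1:ℝ) < 1+lam by linarith) (n+2)
  calc ∑' i : ℕ, Rr (i + n + 1) ^ (1+lam)
      ≤ ∑' i : ℕ, (1/2:ℝ)^(1+lam) * ((i + (n+1) + 1 : ℕ):ℝ)^(-(1+lam)) := by
        apply Summable.tsum_le_tsum _ (summable_Rr hl n) (by
          have hs2 := (summable_shift_rpow (show (1:ℝ) < 1+lam by linarith) (n+2)).mul_left ((1/2:ℝ)^(1+lam))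
          apply hs2.congr
          intro i
          have h2 : i + (n+2) = i + (n+1) + 1 := by omega
          rw [h2])
        intro i
        have h := Rr_rpow_le (k := i + n + 1) (by omega) (show (0:ℝ) ≤ 1+lam by linarith)
        have h2 : i + n + 1 + 1 = i + (n+1) + 1 := by omega
        rw [h2] at h
        exact h
  _ = (1/2:ℝ)^(1+lam) * ∑' i : ℕ, ((i + (n+1) + 1 : ℕ):ℝ)^(-(1+lam)) := by rw [tsum_mul_left]
  _ ≤ (1/2:ℝ)^(1+lam) * (((n+1:ℕ)):ℝ)^(-lam) / lam := by
      have := tail_sum_le hl (n+1) (by omega)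
      have hpos : (0:ℝ) ≤ (1/2:ℝ)^(1+lam) := by positivity
      calc (1/2:ℝ)^(1+lam) * ∑' i : ℕ, ((i + (n+1) + 1 : ℕ):ℝ)^(-(1+lam))
          ≤ (1/2:ℝ)^(1+lam) * ((((n+1:ℕ)):ℝ)^(-lam) / lam) := mul_le_mul_of_nonneg_left this hpos
      _ = (1/2:ℝ)^(1+lam) * (((n+1:ℕ)):ℝ)^(-lam) / lam := by ring

lemma Tf_le (n : ℕ) (hn : 1 ≤ n) {lam : ℝ} (hl : 0 < lam) :
    Tf (1+lam) ≤ (∑ i ∈ Finset.range n, Rr (i+1) ^ (1+lam))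
      + (1/2:ℝ)^(1+lam) * (((n+1 : ℕ)):ℝ)^(-lam) / lam := by
  have hsum : Summable (fun i : ℕ => Rr (i+1) ^ (1+lam)) := by
    simpa using summable_Rr hl 0
  have hsplit := Summable.sum_add_tsum_nat_add (f := fun i : ℕ => Rr (i+1) ^ (1+lam)) n hsum
  rw [Tf, ← hsplit]
  have htail : ∑' i : ℕ, Rr (i + n + 1) ^ (1+lam)
      ≤ (1/2:ℝ)^(1+lam) * (((n+1 : ℕ)):ℝ)^(-lam) / lam := tail_Rr_le hl n hn
  linarith [htail]

lemma Tf_nonneg {s : ℝ} : 0 ≤ Tf s := tsum_nonneg (fun i => Real.rpow_nonneg (Rr_pos _).le _)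

/-! ### Numeric certificates -/

lemma rpow_le_of_pow_le {x c : ℝ} (hx : 0 < x) (hc : 0 < c) {n m : ℕ} (hm : m ≠ 0)
    (h : x ^ n ≤ c ^ m) : x ^ ((n:ℝ)/(m:ℝ)) ≤ c := by
  have h1 : x ^ ((n:ℝ)/(m:ℝ)) = ((x ^ n : ℝ)) ^ ((m:ℝ)⁻¹) := by
    rw [div_eq_mul_inv, Real.rpow_mul hx.le, Real.rpow_natCast]
  rw [h1]
  calc ((x^n :ℝ)) ^ ((m:ℝ)⁻¹) ≤ ((c^m : ℝ)) ^ ((m:ℝ)⁻¹) :=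
        Real.rpow_le_rpow (by positivity) h (by positivity)
  _ = c := Real.pow_rpow_inv_natCast hc.le hm

lemma Tf_le_consts {lam a c1 c2 c3 c4 c10 : ℝ} (ha : 0 < a) (hal : a ≤ lam)
    (h1 : (1/4:ℝ)^(1+a) ≤ c1) (h2 : (4/27:ℝ)^(1+a) ≤ c2)
    (h3 : (27/256:ℝ)^(1+a) ≤ c3) (h4 : (256/3125:ℝ)^(1+a) ≤ c4)
    (h10 : (1/10:ℝ)^a ≤ c10) :
    Tf (1+lam) ≤ (c1+c2+c3+c4) + (1/2)*c10/a
      ∧ lam * Tf (1+lam) ≤ lam*(c1+c2+c3+c4) + (1/2)*c10 := by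
  have hl : 0 < lam := lt_of_lt_of_le ha hal
  have hT := Tf_le 4 (by norm_num) hl
  have hs4 : ∑ i ∈ Finset.range 4, Rr (i+1)^(1+lam)
      = (1/4:ℝ)^(1+lam) + (4/27:ℝ)^(1+lam) + (27/256:ℝ)^(1+lam) + (256/3125:ℝ)^(1+lam) := by
    rw [Finset.sum_range_succ, Finset.sum_range_succ, Finset.sum_range_succ,
      Finset.sum_range_one]
    norm_num [Rr_one, Rr_two, Rr_three, Rr_four]
  rw [hs4] at hT
  have ea : 1 + a ≤ 1 + lam := by linarith
  have t1 : (1/4:ℝ)^(1+lam) ≤ c1 :=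
    (Real.rpow_le_rpow_of_exponent_ge (by norm_num) (by norm_num) ea).trans h1
  have t2 : (4/27:ℝ)^(1+lam) ≤ c2 :=
    (Real.rpow_le_rpow_of_exponent_ge (by norm_num) (by norm_num) ea).trans h2
  have t3 : (27/256:ℝ)^(1+lam) ≤ c3 :=
    (Real.rpow_le_rpow_of_exponent_ge (by norm_num) (by norm_num) ea).trans h3
  have t4 : (256/3125:ℝ)^(1+lam) ≤ c4 :=
    (Real.rpow_le_rpow_of_exponent_ge (by norm_num) (by norm_num) ea).trans h4
  -- tail
  have hhalf : (1/2:ℝ)^(1+lam) ≤ (1/2:ℝ)^(1+a) :=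
    Real.rpow_le_rpow_of_exponent_ge (by norm_num) (by norm_num) ea
  have hfive : ((5:ℕ):ℝ)^(-lam) = (1/5:ℝ)^lam := by
    rw [Real.rpow_neg (by norm_num), show ((5:ℕ):ℝ) = 5 by norm_num,
      show (1/5:ℝ) = (5:ℝ)⁻¹ by norm_num, Real.inv_rpow (by norm_num)]
  have hfive2 : (1/5:ℝ)^lam ≤ (1/5:ℝ)^a :=
    Real.rpow_le_rpow_of_exponent_ge (by norm_num) (by norm_num) hal
  have hmul : (1/2:ℝ)^(1+a) * (1/5:ℝ)^a = (1/2) * (1/10:ℝ)^a := by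
    rw [Real.rpow_add (by norm_num), Real.rpow_one, mul_assoc,
      ← Real.mul_rpow (by norm_num) (by norm_num)]
    norm_num
  have htail_core : (1/2:ℝ)^(1+lam) * ((5:ℕ):ℝ)^(-lam) ≤ (1/2) * c10 := by
    rw [hfive]
    calc (1/2:ℝ)^(1+lam) * (1/5:ℝ)^lam ≤ (1/2:ℝ)^(1+a) * (1/5:ℝ)^a := by
          apply mul_le_mul hhalf hfive2 (by positivity) (by positivity)
    _ = (1/2) * (1/10:ℝ)^a := hmul
    _ ≤ (1/2) * c10 := by linarith
  have hpos5 : (0:ℝ) < ((5:ℕ):ℝ)^(-lam) := by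
    rw [hfive]; positivity
  have hc10 : 0 ≤ c10 := le_trans (by positivity) h10
  have htail : (1/2:ℝ)^(1+lam) * (((4+1 : ℕ)):ℝ)^(-lam) / lam ≤ (1/2)*c10/a := by
    have h5c : (((4+1 : ℕ)):ℝ) = ((5:ℕ):ℝ) := by norm_num
    rw [h5c]
    exact div_le_div₀ (by linarith) htail_core ha hal
  constructor
  · calc Tf (1+lam) ≤ ((1/4:ℝ)^(1+lam) + (4/27:ℝ)^(1+lam) + (27/256:ℝ)^(1+lam)
        + (256/3125:ℝ)^(1+lam)) + (1/2:ℝ)^(1+lam) * (((4+1 : ℕ)):ℝ)^(-lam) / lam := hT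
    _ ≤ (c1+c2+c3+c4) + (1/2)*c10/a := by
        have := htail; linarith
  · have hT' := mul_le_mul_of_nonneg_left hT hl.le
    have htail2 : lam * ((1/2:ℝ)^(1+lam) * (((4+1 : ℕ)):ℝ)^(-lam) / lam)
        = (1/2:ℝ)^(1+lam) * (((4+1 : ℕ)):ℝ)^(-lam) := by
      field_simp
    have h5c : (((4+1 : ℕ)):ℝ) = ((5:ℕ):ℝ) := by norm_num
    calc lam * Tf (1+lam)
        ≤ lam * (((1/4:ℝ)^(1+lam) + (4/27:ℝ)^(1+lam) + (27/256:ℝ)^(1+lam)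
          + (256/3125:ℝ)^(1+lam)) + (1/2:ℝ)^(1+lam) * (((4+1 : ℕ)):ℝ)^(-lam) / lam) := hT'
    _ = lam * ((1/4:ℝ)^(1+lam) + (4/27:ℝ)^(1+lam) + (27/256:ℝ)^(1+lam)
          + (256/3125:ℝ)^(1+lam)) + (1/2:ℝ)^(1+lam) * (((4+1 : ℕ)):ℝ)^(-lam) := by
        rw [mul_add, htail2]
    _ ≤ lam * (c1+c2+c3+c4) + (1/2)*c10 := by
        have hsum_le : (1/4:ℝ)^(1+lam) + (4/27:ℝ)^(1+lam) + (27/256:ℝ)^(1+lam)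
            + (256/3125:ℝ)^(1+lam) ≤ c1+c2+c3+c4 := by linarith
        have := mul_le_mul_of_nonneg_left hsum_le hl.le
        rw [h5c]
        linarith [htail_core]

lemma A_int_1 {lam : ℝ} (hal : (1/2:ℝ) ≤ lam) (hlb : lam ≤ (3/5:ℝ)) :
    lam * (1 + Tf (1+lam)) ≤ 1 := by
  have hc1 : (1/4:ℝ)^(1+(1/2:ℝ)) ≤ (1/8:ℝ) := by
    rw [(show (1+(1/2:ℝ)) = ((3:ℕ):ℝ)/((2:ℕ):ℝ) by norm_num)]
    exact rpow_le_of_pow_le (by norm_num) (by norm_num) (by norm_num) (by norm_num)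
  have hc2 : (4/27:ℝ)^(1+(1/2:ℝ)) ≤ (570223/10000000:ℝ) := by
    rw [(show (1+(1/2:ℝ)) = ((3:ℕ):ℝ)/((2:ℕ):ℝ) by norm_num)]
    exact rpow_le_of_pow_le (by norm_num) (by norm_num) (by norm_num) (by norm_num)
  have hc3 : (27/256:ℝ)^(1+(1/2:ℝ)) ≤ (8563/250000:ℝ) := by
    rw [(show (1+(1/2:ℝ)) = ((3:ℕ):ℝ)/((2:ℕ):ℝ) by norm_num)]
    exact rpow_le_of_pow_le (by norm_num) (by norm_num) (by norm_num) (by norm_num)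
  have hc4 : (256/3125:ℝ)^(1+(1/2:ℝ)) ≤ (234469/10000000:ℝ) := by
    rw [(show (1+(1/2:ℝ)) = ((3:ℕ):ℝ)/((2:ℕ):ℝ) by norm_num)]
    exact rpow_le_of_pow_le (by norm_num) (by norm_num) (by norm_num) (by norm_num)
  have hc10 : (1/10:ℝ)^((1/2:ℝ)) ≤ (1581139/5000000:ℝ) := by
    rw [(show ((1/2:ℝ)) = ((1:ℕ):ℝ)/((2:ℕ):ℝ) by norm_num)]
    exact rpow_le_of_pow_le (by norm_num) (by norm_num) (by norm_num) (by norm_num)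
  obtain ⟨hTf, hlT⟩ := Tf_le_consts (by norm_num) hal hc1 hc2 hc3 hc4 hc10
  have hCnn : (0:ℝ) ≤ (599303/2500000:ℝ) := by norm_num
  have hmono : lam * ((599303/2500000:ℝ)) ≤ (3/5:ℝ) * ((599303/2500000:ℝ)) :=
    mul_le_mul_of_nonneg_right hlb hCnn
  have hsum : lam * Tf (1+lam) ≤ (3/5:ℝ) * ((599303/2500000:ℝ)) + (1/2)*(1581139/5000000:ℝ) := by
    calc lam * Tf (1+lam) ≤ lam*((1/8:ℝ)+(570223/10000000:ℝ)+(8563/250000:ℝ)+(234469/10000000:ℝ)) + (1/2)*(1581139/5000000:ℝ) := hlT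
    _ ≤ (3/5:ℝ) * ((599303/2500000:ℝ)) + (1/2)*(1581139/5000000:ℝ) := by norm_num at hmono ⊢; linarith
  have : lam * (1 + Tf (1+lam)) = lam + lam * Tf (1+lam) := by ring
  rw [this]
  have hfin : (3/5:ℝ) + ((3/5:ℝ) * ((599303/2500000:ℝ)) + (1/2)*(1581139/5000000:ℝ)) ≤ 1 := by norm_num
  linarith

lemma A_int_2 {lam : ℝ} (hal : (3/5:ℝ) ≤ lam) (hlb : lam ≤ (7/10:ℝ)) :
    lam * (1 + Tf (1+lam)) ≤ 1 := by
  have hc1 : (1/4:ℝ)^(1+(3/5:ℝ)) ≤ (1088189/10000000:ℝ) := by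
    rw [(show (1+(3/5:ℝ)) = ((8:ℕ):ℝ)/((5:ℕ):ℝ) by norm_num)]
    exact rpow_le_of_pow_le (by norm_num) (by norm_num) (by norm_num) (by norm_num)
  have hc2 : (4/27:ℝ)^(1+(3/5:ℝ)) ≤ (471101/10000000:ℝ) := by
    rw [(show (1+(3/5:ℝ)) = ((8:ℕ):ℝ)/((5:ℕ):ℝ) by norm_num)]
    exact rpow_le_of_pow_le (by norm_num) (by norm_num) (by norm_num) (by norm_num)
  have hc3 : (27/256:ℝ)^(1+(3/5:ℝ)) ≤ (136763/5000000:ℝ) := by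
    rw [(show (1+(3/5:ℝ)) = ((8:ℕ):ℝ)/((5:ℕ):ℝ) by norm_num)]
    exact rpow_le_of_pow_le (by norm_num) (by norm_num) (by norm_num) (by norm_num)
  have hc4 : (256/3125:ℝ)^(1+(3/5:ℝ)) ≤ (22821/1250000:ℝ) := by
    rw [(show (1+(3/5:ℝ)) = ((8:ℕ):ℝ)/((5:ℕ):ℝ) by norm_num)]
    exact rpow_le_of_pow_le (by norm_num) (by norm_num) (by norm_num) (by norm_num)
  have hc10 : (1/10:ℝ)^((3/5:ℝ)) ≤ (2511887/10000000:ℝ) := by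
    rw [(show ((3/5:ℝ)) = ((3:ℕ):ℝ)/((5:ℕ):ℝ) by norm_num)]
    exact rpow_le_of_pow_le (by norm_num) (by norm_num) (by norm_num) (by norm_num)
  obtain ⟨hTf, hlT⟩ := Tf_le_consts (by norm_num) hal hc1 hc2 hc3 hc4 hc10
  have hCnn : (0:ℝ) ≤ (251923/1250000:ℝ) := by norm_num
  have hmono : lam * ((251923/1250000:ℝ)) ≤ (7/10:ℝ) * ((251923/1250000:ℝ)) :=
    mul_le_mul_of_nonneg_right hlb hCnn
  have hsum : lam * Tf (1+lam) ≤ (7/10:ℝ) * ((251923/1250000:ℝ)) + (1/2)*(2511887/10000000:ℝ) := by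
    calc lam * Tf (1+lam) ≤ lam*((1088189/10000000:ℝ)+(471101/10000000:ℝ)+(136763/5000000:ℝ)+(22821/1250000:ℝ)) + (1/2)*(2511887/10000000:ℝ) := hlT
    _ ≤ (7/10:ℝ) * ((251923/1250000:ℝ)) + (1/2)*(2511887/10000000:ℝ) := by norm_num at hmono ⊢; linarith
  have : lam * (1 + Tf (1+lam)) = lam + lam * Tf (1+lam) := by ring
  rw [this]
  have hfin : (7/10:ℝ) + ((7/10:ℝ) * ((251923/1250000:ℝ)) + (1/2)*(2511887/10000000:ℝ)) ≤ 1 := by norm_num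
  linarith

lemma B_int_1 {lam : ℝ} (hal : (7/10:ℝ) ≤ lam) (hlb : lam ≤ (4/5:ℝ)) :
    Real.exp 1 * (lam * Tf (1+lam)) ≤ 1 - Tf (1+lam) := by
  have hc1 : (1/4:ℝ)^(1+(7/10:ℝ)) ≤ (947323/10000000:ℝ) := by
    rw [(show (1+(7/10:ℝ)) = ((17:ℕ):ℝ)/((10:ℕ):ℝ) by norm_num)]
    exact rpow_le_of_pow_le (by norm_num) (by norm_num) (by norm_num) (by norm_num)
  have hc2 : (4/27:ℝ)^(1+(7/10:ℝ)) ≤ (38921/1000000:ℝ) := by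
    rw [(show (1+(7/10:ℝ)) = ((17:ℕ):ℝ)/((10:ℕ):ℝ) by norm_num)]
    exact rpow_le_of_pow_le (by norm_num) (by norm_num) (by norm_num) (by norm_num)
  have hc3 : (27/256:ℝ)^(1+(7/10:ℝ)) ≤ (21843/1000000:ℝ) := by
    rw [(show (1+(7/10:ℝ)) = ((17:ℕ):ℝ)/((10:ℕ):ℝ) by norm_num)]
    exact rpow_le_of_pow_le (by norm_num) (by norm_num) (by norm_num) (by norm_num)
  have hc4 : (256/3125:ℝ)^(1+(7/10:ℝ)) ≤ (35539/2500000:ℝ) := by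
    rw [(show (1+(7/10:ℝ)) = ((17:ℕ):ℝ)/((10:ℕ):ℝ) by norm_num)]
    exact rpow_le_of_pow_le (by norm_num) (by norm_num) (by norm_num) (by norm_num)
  have hc10 : (1/10:ℝ)^((7/10:ℝ)) ≤ (1995263/10000000:ℝ) := by
    rw [(show ((7/10:ℝ)) = ((7:ℕ):ℝ)/((10:ℕ):ℝ) by norm_num)]
    exact rpow_le_of_pow_le (by norm_num) (by norm_num) (by norm_num) (by norm_num)
  obtain ⟨hTf, hlT⟩ := Tf_le_consts (by norm_num) hal hc1 hc2 hc3 hc4 hc10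
  have ht : Tf (1+lam) ≤ (5464037/17500000:ℝ) := by
    calc Tf (1+lam) ≤ ((947323/10000000:ℝ)+(38921/1000000:ℝ)+(21843/1000000:ℝ)+(35539/2500000:ℝ)) + (1/2)*(1995263/10000000:ℝ)/(7/10:ℝ) := hTf
    _ = (5464037/17500000:ℝ) := by norm_num
  have hTnn : 0 ≤ Tf (1+lam) := Tf_nonneg
  have hlam0 : (0:ℝ) ≤ lam := by norm_num at hal ⊢; linarith
  have hlt : lam * Tf (1+lam) ≤ (4/5:ℝ) * (5464037/17500000:ℝ) :=
    mul_le_mul hlb ht hTnn (by norm_num)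
  have he := Real.exp_one_lt_d9
  have hexp0 : (0:ℝ) ≤ Real.exp 1 := (Real.exp_pos 1).le
  calc Real.exp 1 * (lam * Tf (1+lam)) ≤ (2.7182818286 : ℝ) * ((4/5:ℝ) * (5464037/17500000:ℝ)) := by
        apply mul_le_mul he.le hlt (by positivity) (by norm_num)
  _ ≤ 1 - (5464037/17500000:ℝ) := by norm_num
  _ ≤ 1 - Tf (1+lam) := by linarith

lemma B_int_2 {lam : ℝ} (hal : (4/5:ℝ) ≤ lam) (hlb : lam ≤ (9/10:ℝ)) :
    Real.exp 1 * (lam * Tf (1+lam)) ≤ 1 - Tf (1+lam) := by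
  have hc1 : (1/4:ℝ)^(1+(4/5:ℝ)) ≤ (824693/10000000:ℝ) := by
    rw [(show (1+(4/5:ℝ)) = ((9:ℕ):ℝ)/((5:ℕ):ℝ) by norm_num)]
    exact rpow_le_of_pow_le (by norm_num) (by norm_num) (by norm_num) (by norm_num)
  have hc2 : (4/27:ℝ)^(1+(4/5:ℝ)) ≤ (160777/5000000:ℝ) := by
    rw [(show (1+(4/5:ℝ)) = ((9:ℕ):ℝ)/((5:ℕ):ℝ) by norm_num)]
    exact rpow_le_of_pow_le (by norm_num) (by norm_num) (by norm_num) (by norm_num)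
  have hc3 : (27/256:ℝ)^(1+(4/5:ℝ)) ≤ (174431/10000000:ℝ) := by
    rw [(show (1+(4/5:ℝ)) = ((9:ℕ):ℝ)/((5:ℕ):ℝ) by norm_num)]
    exact rpow_le_of_pow_le (by norm_num) (by norm_num) (by norm_num) (by norm_num)
  have hc4 : (256/3125:ℝ)^(1+(4/5:ℝ)) ≤ (110689/10000000:ℝ) := by
    rw [(show (1+(4/5:ℝ)) = ((9:ℕ):ℝ)/((5:ℕ):ℝ) by norm_num)]
    exact rpow_le_of_pow_le (by norm_num) (by norm_num) (by norm_num) (by norm_num)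
  have hc10 : (1/10:ℝ)^((4/5:ℝ)) ≤ (792447/5000000:ℝ) := by
    rw [(show ((4/5:ℝ)) = ((4:ℕ):ℝ)/((5:ℕ):ℝ) by norm_num)]
    exact rpow_le_of_pow_le (by norm_num) (by norm_num) (by norm_num) (by norm_num)
  obtain ⟨hTf, hlT⟩ := Tf_le_consts (by norm_num) hal hc1 hc2 hc3 hc4 hc10
  have ht : Tf (1+lam) ≤ (9687703/40000000:ℝ) := by
    calc Tf (1+lam) ≤ ((824693/10000000:ℝ)+(160777/5000000:ℝ)+(174431/10000000:ℝ)+(110689/10000000:ℝ)) + (1/2)*(792447/5000000:ℝ)/(4/5:ℝ) := hTf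
    _ = (9687703/40000000:ℝ) := by norm_num
  have hTnn : 0 ≤ Tf (1+lam) := Tf_nonneg
  have hlam0 : (0:ℝ) ≤ lam := by norm_num at hal ⊢; linarith
  have hlt : lam * Tf (1+lam) ≤ (9/10:ℝ) * (9687703/40000000:ℝ) :=
    mul_le_mul hlb ht hTnn (by norm_num)
  have he := Real.exp_one_lt_d9
  have hexp0 : (0:ℝ) ≤ Real.exp 1 := (Real.exp_pos 1).le
  calc Real.exp 1 * (lam * Tf (1+lam)) ≤ (2.7182818286 : ℝ) * ((9/10:ℝ) * (9687703/40000000:ℝ)) := by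
        apply mul_le_mul he.le hlt (by positivity) (by norm_num)
  _ ≤ 1 - (9687703/40000000:ℝ) := by norm_num
  _ ≤ 1 - Tf (1+lam) := by linarith

lemma B_int_3 {lam : ℝ} (hal : (9/10:ℝ) ≤ lam) (hlb : lam ≤ (1:ℝ)) :
    Real.exp 1 * (lam * Tf (1+lam)) ≤ 1 - Tf (1+lam) := by
  have hc1 : (1/4:ℝ)^(1+(9/10:ℝ)) ≤ (717937/10000000:ℝ) := by
    rw [(show (1+(9/10:ℝ)) = ((19:ℕ):ℝ)/((10:ℕ):ℝ) by norm_num)]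
    exact rpow_le_of_pow_le (by norm_num) (by norm_num) (by norm_num) (by norm_num)
  have hc2 : (4/27:ℝ)^(1+(9/10:ℝ)) ≤ (132829/5000000:ℝ) := by
    rw [(show (1+(9/10:ℝ)) = ((19:ℕ):ℝ)/((10:ℕ):ℝ) by norm_num)]
    exact rpow_le_of_pow_le (by norm_num) (by norm_num) (by norm_num) (by norm_num)
  have hc3 : (27/256:ℝ)^(1+(9/10:ℝ)) ≤ (27859/2000000:ℝ) := by
    rw [(show (1+(9/10:ℝ)) = ((19:ℕ):ℝ)/((10:ℕ):ℝ) by norm_num)]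
    exact rpow_le_of_pow_le (by norm_num) (by norm_num) (by norm_num) (by norm_num)
  have hc4 : (256/3125:ℝ)^(1+(9/10:ℝ)) ≤ (86187/10000000:ℝ) := by
    rw [(show (1+(9/10:ℝ)) = ((19:ℕ):ℝ)/((10:ℕ):ℝ) by norm_num)]
    exact rpow_le_of_pow_le (by norm_num) (by norm_num) (by norm_num) (by norm_num)
  have hc10 : (1/10:ℝ)^((9/10:ℝ)) ≤ (629463/5000000:ℝ) := by
    rw [(show ((9/10:ℝ)) = ((9:ℕ):ℝ)/((10:ℕ):ℝ) by norm_num)]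
    exact rpow_le_of_pow_le (by norm_num) (by norm_num) (by norm_num) (by norm_num)
  obtain ⟨hTf, hlT⟩ := Tf_le_consts (by norm_num) hal hc1 hc2 hc3 hc4 hc10
  have ht : Tf (1+lam) ≤ (5725441/30000000:ℝ) := by
    calc Tf (1+lam) ≤ ((717937/10000000:ℝ)+(132829/5000000:ℝ)+(27859/2000000:ℝ)+(86187/10000000:ℝ)) + (1/2)*(629463/5000000:ℝ)/(9/10:ℝ) := hTf
    _ = (5725441/30000000:ℝ) := by norm_num
  have hTnn : 0 ≤ Tf (1+lam) := Tf_nonneg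
  have hlam0 : (0:ℝ) ≤ lam := by norm_num at hal ⊢; linarith
  have hlt : lam * Tf (1+lam) ≤ (1:ℝ) * (5725441/30000000:ℝ) :=
    mul_le_mul hlb ht hTnn (by norm_num)
  have he := Real.exp_one_lt_d9
  have hexp0 : (0:ℝ) ≤ Real.exp 1 := (Real.exp_pos 1).le
  calc Real.exp 1 * (lam * Tf (1+lam)) ≤ (2.7182818286 : ℝ) * ((1:ℝ) * (5725441/30000000:ℝ)) := by
        apply mul_le_mul he.le hlt (by positivity) (by norm_num)
  _ ≤ 1 - (5725441/30000000:ℝ) := by norm_num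
  _ ≤ 1 - Tf (1+lam) := by linarith

lemma B_int_4 {lam : ℝ} (hal : (1:ℝ) ≤ lam) (hlb : lam ≤ (6/5:ℝ)) :
    Real.exp 1 * (lam * Tf (1+lam)) ≤ 1 - Tf (1+lam) := by
  have hc1 : (1/4:ℝ)^(1+(1:ℝ)) ≤ (1/16:ℝ) := by
    rw [(show (1+(1:ℝ)) = ((2:ℕ):ℝ)/((1:ℕ):ℝ) by norm_num)]
    exact rpow_le_of_pow_le (by norm_num) (by norm_num) (by norm_num) (by norm_num)
  have hc2 : (4/27:ℝ)^(1+(1:ℝ)) ≤ (219479/10000000:ℝ) := by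
    rw [(show (1+(1:ℝ)) = ((2:ℕ):ℝ)/((1:ℕ):ℝ) by norm_num)]
    exact rpow_le_of_pow_le (by norm_num) (by norm_num) (by norm_num) (by norm_num)
  have hc3 : (27/256:ℝ)^(1+(1:ℝ)) ≤ (111237/10000000:ℝ) := by
    rw [(show (1+(1:ℝ)) = ((2:ℕ):ℝ)/((1:ℕ):ℝ) by norm_num)]
    exact rpow_le_of_pow_le (by norm_num) (by norm_num) (by norm_num) (by norm_num)
  have hc4 : (256/3125:ℝ)^(1+(1:ℝ)) ≤ (67109/10000000:ℝ) := by
    rw [(show (1+(1:ℝ)) = ((2:ℕ):ℝ)/((1:ℕ):ℝ) by norm_num)]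
    exact rpow_le_of_pow_le (by norm_num) (by norm_num) (by norm_num) (by norm_num)
  have hc10 : (1/10:ℝ)^((1:ℝ)) ≤ (1/10:ℝ) := by
    rw [(show ((1:ℝ)) = ((1:ℕ):ℝ)/((1:ℕ):ℝ) by norm_num)]
    exact rpow_le_of_pow_le (by norm_num) (by norm_num) (by norm_num) (by norm_num)
  obtain ⟨hTf, hlT⟩ := Tf_le_consts (by norm_num) hal hc1 hc2 hc3 hc4 hc10
  have ht : Tf (1+lam) ≤ (60913/400000:ℝ) := by
    calc Tf (1+lam) ≤ ((1/16:ℝ)+(219479/10000000:ℝ)+(111237/10000000:ℝ)+(67109/10000000:ℝ)) + (1/2)*(1/10:ℝ)/(1:ℝ) := hTf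
    _ = (60913/400000:ℝ) := by norm_num
  have hTnn : 0 ≤ Tf (1+lam) := Tf_nonneg
  have hlam0 : (0:ℝ) ≤ lam := by norm_num at hal ⊢; linarith
  have hlt : lam * Tf (1+lam) ≤ (6/5:ℝ) * (60913/400000:ℝ) :=
    mul_le_mul hlb ht hTnn (by norm_num)
  have he := Real.exp_one_lt_d9
  have hexp0 : (0:ℝ) ≤ Real.exp 1 := (Real.exp_pos 1).le
  calc Real.exp 1 * (lam * Tf (1+lam)) ≤ (2.7182818286 : ℝ) * ((6/5:ℝ) * (60913/400000:ℝ)) := by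
        apply mul_le_mul he.le hlt (by positivity) (by norm_num)
  _ ≤ 1 - (60913/400000:ℝ) := by norm_num
  _ ≤ 1 - Tf (1+lam) := by linarith

lemma B_int_5 {lam : ℝ} (hal : (6/5:ℝ) ≤ lam) (hlb : lam ≤ (3/2:ℝ)) :
    Real.exp 1 * (lam * Tf (1+lam)) ≤ 1 - Tf (1+lam) := by
  have hc1 : (1/4:ℝ)^(1+(6/5:ℝ)) ≤ (236831/5000000:ℝ) := by
    rw [(show (1+(6/5:ℝ)) = ((11:ℕ):ℝ)/((5:ℕ):ℝ) by norm_num)]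
    exact rpow_le_of_pow_le (by norm_num) (by norm_num) (by norm_num) (by norm_num)
  have hc2 : (4/27:ℝ)^(1+(6/5:ℝ)) ≤ (149807/10000000:ℝ) := by
    rw [(show (1+(6/5:ℝ)) = ((11:ℕ):ℝ)/((5:ℕ):ℝ) by norm_num)]
    exact rpow_le_of_pow_le (by norm_num) (by norm_num) (by norm_num) (by norm_num)
  have hc3 : (27/256:ℝ)^(1+(6/5:ℝ)) ≤ (70937/10000000:ℝ) := by
    rw [(show (1+(6/5:ℝ)) = ((11:ℕ):ℝ)/((5:ℕ):ℝ) by norm_num)]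
    exact rpow_le_of_pow_le (by norm_num) (by norm_num) (by norm_num) (by norm_num)
  have hc4 : (256/3125:ℝ)^(1+(6/5:ℝ)) ≤ (2543/625000:ℝ) := by
    rw [(show (1+(6/5:ℝ)) = ((11:ℕ):ℝ)/((5:ℕ):ℝ) by norm_num)]
    exact rpow_le_of_pow_le (by norm_num) (by norm_num) (by norm_num) (by norm_num)
  have hc10 : (1/10:ℝ)^((6/5:ℝ)) ≤ (315479/5000000:ℝ) := by
    rw [(show ((6/5:ℝ)) = ((6:ℕ):ℝ)/((5:ℕ):ℝ) by norm_num)]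
    exact rpow_le_of_pow_le (by norm_num) (by norm_num) (by norm_num) (by norm_num)
  obtain ⟨hTf, hlT⟩ := Tf_le_consts (by norm_num) hal hc1 hc2 hc3 hc4 hc10
  have ht : Tf (1+lam) ≤ (5987959/60000000:ℝ) := by
    calc Tf (1+lam) ≤ ((236831/5000000:ℝ)+(149807/10000000:ℝ)+(70937/10000000:ℝ)+(2543/625000:ℝ)) + (1/2)*(315479/5000000:ℝ)/(6/5:ℝ) := hTf
    _ = (5987959/60000000:ℝ) := by norm_num
  have hTnn : 0 ≤ Tf (1+lam) := Tf_nonneg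
  have hlam0 : (0:ℝ) ≤ lam := by norm_num at hal ⊢; linarith
  have hlt : lam * Tf (1+lam) ≤ (3/2:ℝ) * (5987959/60000000:ℝ) :=
    mul_le_mul hlb ht hTnn (by norm_num)
  have he := Real.exp_one_lt_d9
  have hexp0 : (0:ℝ) ≤ Real.exp 1 := (Real.exp_pos 1).le
  calc Real.exp 1 * (lam * Tf (1+lam)) ≤ (2.7182818286 : ℝ) * ((3/2:ℝ) * (5987959/60000000:ℝ)) := by
        apply mul_le_mul he.le hlt (by positivity) (by norm_num)
  _ ≤ 1 - (5987959/60000000:ℝ) := by norm_num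
  _ ≤ 1 - Tf (1+lam) := by linarith

lemma B_int_6 {lam : ℝ} (hal : (3/2:ℝ) ≤ lam) (hlb : lam ≤ (2:ℝ)) :
    Real.exp 1 * (lam * Tf (1+lam)) ≤ 1 - Tf (1+lam) := by
  have hc1 : (1/4:ℝ)^(1+(3/2:ℝ)) ≤ (1/32:ℝ) := by
    rw [(show (1+(3/2:ℝ)) = ((5:ℕ):ℝ)/((2:ℕ):ℝ) by norm_num)]
    exact rpow_le_of_pow_le (by norm_num) (by norm_num) (by norm_num) (by norm_num)
  have hc2 : (4/27:ℝ)^(1+(3/2:ℝ)) ≤ (42239/5000000:ℝ) := by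
    rw [(show (1+(3/2:ℝ)) = ((5:ℕ):ℝ)/((2:ℕ):ℝ) by norm_num)]
    exact rpow_le_of_pow_le (by norm_num) (by norm_num) (by norm_num) (by norm_num)
  have hc3 : (27/256:ℝ)^(1+(3/2:ℝ)) ≤ (18063/5000000:ℝ) := by
    rw [(show (1+(3/2:ℝ)) = ((5:ℕ):ℝ)/((2:ℕ):ℝ) by norm_num)]
    exact rpow_le_of_pow_le (by norm_num) (by norm_num) (by norm_num) (by norm_num)
  have hc4 : (256/3125:ℝ)^(1+(3/2:ℝ)) ≤ (2401/1250000:ℝ) := by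
    rw [(show (1+(3/2:ℝ)) = ((5:ℕ):ℝ)/((2:ℕ):ℝ) by norm_num)]
    exact rpow_le_of_pow_le (by norm_num) (by norm_num) (by norm_num) (by norm_num)
  have hc10 : (1/10:ℝ)^((3/2:ℝ)) ≤ (79057/2500000:ℝ) := by
    rw [(show ((3/2:ℝ)) = ((3:ℕ):ℝ)/((2:ℕ):ℝ) by norm_num)]
    exact rpow_le_of_pow_le (by norm_num) (by norm_num) (by norm_num) (by norm_num)
  obtain ⟨hTf, hlT⟩ := Tf_le_consts (by norm_num) hal hc1 hc2 hc3 hc4 hc10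
  have ht : Tf (1+lam) ≤ (418291/7500000:ℝ) := by
    calc Tf (1+lam) ≤ ((1/32:ℝ)+(42239/5000000:ℝ)+(18063/5000000:ℝ)+(2401/1250000:ℝ)) + (1/2)*(79057/2500000:ℝ)/(3/2:ℝ) := hTf
    _ = (418291/7500000:ℝ) := by norm_num
  have hTnn : 0 ≤ Tf (1+lam) := Tf_nonneg
  have hlam0 : (0:ℝ) ≤ lam := by norm_num at hal ⊢; linarith
  have hlt : lam * Tf (1+lam) ≤ (2:ℝ) * (418291/7500000:ℝ) :=
    mul_le_mul hlb ht hTnn (by norm_num)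
  have he := Real.exp_one_lt_d9
  have hexp0 : (0:ℝ) ≤ Real.exp 1 := (Real.exp_pos 1).le
  calc Real.exp 1 * (lam * Tf (1+lam)) ≤ (2.7182818286 : ℝ) * ((2:ℝ) * (418291/7500000:ℝ)) := by
        apply mul_le_mul he.le hlt (by positivity) (by norm_num)
  _ ≤ 1 - (418291/7500000:ℝ) := by norm_num
  _ ≤ 1 - Tf (1+lam) := by linarith

lemma B_int_7 {lam : ℝ} (hal : (2:ℝ) ≤ lam) (hlb : lam ≤ (3:ℝ)) :
    Real.exp 1 * (lam * Tf (1+lam)) ≤ 1 - Tf (1+lam) := by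
  have hc1 : (1/4:ℝ)^(1+(2:ℝ)) ≤ (1/64:ℝ) := by
    rw [(show (1+(2:ℝ)) = ((3:ℕ):ℝ)/((1:ℕ):ℝ) by norm_num)]
    exact rpow_le_of_pow_le (by norm_num) (by norm_num) (by norm_num) (by norm_num)
  have hc2 : (4/27:ℝ)^(1+(2:ℝ)) ≤ (8129/2500000:ℝ) := by
    rw [(show (1+(2:ℝ)) = ((3:ℕ):ℝ)/((1:ℕ):ℝ) by norm_num)]
    exact rpow_le_of_pow_le (by norm_num) (by norm_num) (by norm_num) (by norm_num)
  have hc3 : (27/256:ℝ)^(1+(2:ℝ)) ≤ (2933/2500000:ℝ) := by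
    rw [(show (1+(2:ℝ)) = ((3:ℕ):ℝ)/((1:ℕ):ℝ) by norm_num)]
    exact rpow_le_of_pow_le (by norm_num) (by norm_num) (by norm_num) (by norm_num)
  have hc4 : (256/3125:ℝ)^(1+(2:ℝ)) ≤ (2749/5000000:ℝ) := by
    rw [(show (1+(2:ℝ)) = ((3:ℕ):ℝ)/((1:ℕ):ℝ) by norm_num)]
    exact rpow_le_of_pow_le (by norm_num) (by norm_num) (by norm_num) (by norm_num)
  have hc10 : (1/10:ℝ)^((2:ℝ)) ≤ (100001/10000000:ℝ) := by
    rw [(show ((2:ℝ)) = ((2:ℕ):ℝ)/((1:ℕ):ℝ) by norm_num)]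
    exact rpow_le_of_pow_le (by norm_num) (by norm_num) (by norm_num) (by norm_num)
  obtain ⟨hTf, hlT⟩ := Tf_le_consts (by norm_num) hal hc1 hc2 hc3 hc4 hc10
  have ht : Tf (1+lam) ≤ (184797/8000000:ℝ) := by
    calc Tf (1+lam) ≤ ((1/64:ℝ)+(8129/2500000:ℝ)+(2933/2500000:ℝ)+(2749/5000000:ℝ)) + (1/2)*(100001/10000000:ℝ)/(2:ℝ) := hTf
    _ = (184797/8000000:ℝ) := by norm_num
  have hTnn : 0 ≤ Tf (1+lam) := Tf_nonneg
  have hlam0 : (0:ℝ) ≤ lam := by norm_num at hal ⊢; linarith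
  have hlt : lam * Tf (1+lam) ≤ (3:ℝ) * (184797/8000000:ℝ) :=
    mul_le_mul hlb ht hTnn (by norm_num)
  have he := Real.exp_one_lt_d9
  have hexp0 : (0:ℝ) ≤ Real.exp 1 := (Real.exp_pos 1).le
  calc Real.exp 1 * (lam * Tf (1+lam)) ≤ (2.7182818286 : ℝ) * ((3:ℝ) * (184797/8000000:ℝ)) := by
        apply mul_le_mul he.le hlt (by positivity) (by norm_num)
  _ ≤ 1 - (184797/8000000:ℝ) := by norm_num
  _ ≤ 1 - Tf (1+lam) := by linarith

lemma quarter_rpow_chord {lam : ℝ} (h0 : 0 ≤ lam) (hl : lam ≤ 1/2) :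
    (1/4:ℝ)^lam ≤ 1 - lam := by
  have hkey : (1/4:ℝ)^lam = Real.exp ((1-2*lam) • (0:ℝ) + (2*lam) • Real.log (1/2)) := by
    rw [Real.rpow_def_of_pos (by norm_num)]
    congr 1
    have : Real.log (1/4 : ℝ) = 2 * Real.log (1/2) := by
      rw [show (1/4:ℝ) = (1/2:ℝ)^(2:ℕ) by norm_num, Real.log_pow]
      norm_num
    rw [this]
    simp [smul_eq_mul]
    ring
  have hconv := convexOn_exp.2 (Set.mem_univ (0:ℝ)) (Set.mem_univ (Real.log (1/2)))
    (show (0:ℝ) ≤ 1-2*lam by linarith) (show (0:ℝ) ≤ 2*lam by linarith)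
    (show (1-2*lam) + 2*lam = 1 by ring)
  rw [← hkey] at hconv
  have hexp0 : Real.exp 0 = 1 := Real.exp_zero
  have hexph : Real.exp (Real.log (1/2:ℝ)) = 1/2 := Real.exp_log (by norm_num)
  simp only [smul_eq_mul, hexp0, hexph] at hconv
  linarith

lemma A_int_0 {lam : ℝ} (h0 : 0 < lam) (hl : lam ≤ 1/2) :
    lam * (1 + Tf (1+lam)) ≤ 1 := by
  have hT := Tf_le 1 (le_refl 1) h0
  rw [Finset.sum_range_one] at hT
  norm_num [Rr_one] at hT
  -- hT : Tf (1+lam) ≤ (1/4)^(1+lam) + (1/2)^(1+lam) * ((2:ℕ):ℝ)^(-lam)/lam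
  have h2c : ((1+1 : ℕ):ℝ) = (2:ℝ) := by norm_num
  have htwo : (2:ℝ)^(-lam) = (1/2:ℝ)^lam := by
    rw [Real.rpow_neg (by norm_num), show (1/2:ℝ) = (2:ℝ)⁻¹ by norm_num,
      Real.inv_rpow (by norm_num)]
  have hhalf : (1/2:ℝ)^(1+lam) = (1/2) * (1/2:ℝ)^lam := by
    rw [Real.rpow_add (by norm_num), Real.rpow_one]
  have hq : (1/4:ℝ)^(1+lam) = (1/4) * (1/4:ℝ)^lam := by
    rw [Real.rpow_add (by norm_num), Real.rpow_one]
  have hqq : (1/2:ℝ)^lam * (1/2:ℝ)^lam = (1/4:ℝ)^lam := by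
    rw [← Real.mul_rpow (by norm_num) (by norm_num)]
    norm_num
  have hch := quarter_rpow_chord h0.le hl
  have hunn : (0:ℝ) ≤ (1/4:ℝ)^lam := by positivity
  have hTle : Tf (1+lam) ≤ (1/4) * (1/4:ℝ)^lam + ((1/2) * (1/4:ℝ)^lam)/lam := by
    have : (1/2:ℝ)^(1+lam) * (2:ℝ)^(-lam) = (1/2) * (1/4:ℝ)^lam := by
      rw [htwo, hhalf]
      rw [mul_assoc, hqq]
    calc Tf (1+lam) ≤ (1/4:ℝ)^(1+lam) + (1/2:ℝ)^(1+lam) * ((1+1 : ℕ):ℝ)^(-lam)/lam := hT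
    _ = (1/4) * (1/4:ℝ)^lam + ((1/2) * (1/4:ℝ)^lam)/lam := by
        rw [h2c, hq, ← this]
  have hmul := mul_le_mul_of_nonneg_left hTle h0.le
  have hdiv : lam * (((1/2) * (1/4:ℝ)^lam)/lam) = (1/2) * (1/4:ℝ)^lam := by
    field_simp
  nlinarith [hch, hunn, h0.le]

lemma mul_exp_neg_le {z : ℝ} (hz : 0 < z) : z * Real.exp (-z) ≤ Real.exp (-1) := by
  have hlog := Real.log_le_sub_one_of_pos hz
  have : z * Real.exp (-z) = Real.exp (Real.log z - z) := by
    rw [Real.exp_sub, Real.exp_log hz, Real.exp_neg]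
    ring
  rw [this]
  apply Real.exp_le_exp.2
  linarith

lemma B_large {lam : ℝ} (h3 : 3 ≤ lam) :
    Real.exp 1 * (lam * Tf (1+lam)) ≤ 1 - Tf (1+lam) := by
  have hl : 0 < lam := by linarith
  have hlog2 := Real.log_two_gt_d9
  have hlog4 : Real.log 4 = 2 * Real.log 2 := by
    rw [show (4:ℝ) = (2:ℝ)^(2:ℕ) by norm_num, Real.log_pow]
    norm_num
  have hlog4pos : 0 < Real.log 4 := by rw [hlog4]; linarith
  have hT := Tf_le 4 (by norm_num) hl
  have hs4 : ∑ i ∈ Finset.range 4, Rr (i+1)^(1+lam)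
      = (1/4:ℝ)^(1+lam) + (4/27:ℝ)^(1+lam) + (27/256:ℝ)^(1+lam) + (256/3125:ℝ)^(1+lam) := by
    rw [Finset.sum_range_succ, Finset.sum_range_succ, Finset.sum_range_succ,
      Finset.sum_range_one]
    norm_num [Rr_one, Rr_two, Rr_three, Rr_four]
  rw [hs4] at hT
  have hse : (0:ℝ) ≤ 1 + lam := by linarith
  have t2 : (4/27:ℝ)^(1+lam) ≤ (1/4:ℝ)^(1+lam) :=
    Real.rpow_le_rpow (by norm_num) (by norm_num) hse
  have t3 : (27/256:ℝ)^(1+lam) ≤ (1/4:ℝ)^(1+lam) :=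
    Real.rpow_le_rpow (by norm_num) (by norm_num) hse
  have t4 : (256/3125:ℝ)^(1+lam) ≤ (1/4:ℝ)^(1+lam) :=
    Real.rpow_le_rpow (by norm_num) (by norm_num) hse
  have hfive : ((4+1:ℕ):ℝ)^(-lam) = (1/5:ℝ)^lam := by
    rw [Real.rpow_neg (by norm_num), show ((4+1:ℕ):ℝ) = 5 by norm_num,
      show (1/5:ℝ) = (5:ℝ)⁻¹ by norm_num, Real.inv_rpow (by norm_num)]
  have t5 : (1/2:ℝ)^(1+lam) * ((4+1:ℕ):ℝ)^(-lam)/lam ≤ (1/4:ℝ)^(1+lam) := by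
    rw [hfive]
    have hA : (1/5:ℝ)^lam ≤ (1/2:ℝ)^lam :=
      Real.rpow_le_rpow (by norm_num) (by norm_num) hl.le
    have hB : (1/2:ℝ)^(1+lam) * (1/5:ℝ)^lam / lam ≤ (1/2:ℝ)^(1+lam) * (1/2:ℝ)^lam * (1/2) := by
      have h1 : (1/2:ℝ)^(1+lam) * (1/5:ℝ)^lam ≤ (1/2:ℝ)^(1+lam) * (1/2:ℝ)^lam :=
        mul_le_mul_of_nonneg_left hA (by positivity)
      have h2 : (1/2:ℝ)^(1+lam) * (1/5:ℝ)^lam / lam ≤ (1/2:ℝ)^(1+lam) * (1/5:ℝ)^lam * (1/3) := by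
        rw [div_eq_mul_inv]
        apply mul_le_mul_of_nonneg_left _ (by positivity)
        rw [show (1/3:ℝ) = (3:ℝ)⁻¹ by norm_num]
        exact inv_anti₀ (by norm_num) h3
      have h3' : (1/2:ℝ)^(1+lam) * (1/5:ℝ)^lam * (1/3) ≤ (1/2:ℝ)^(1+lam) * (1/2:ℝ)^lam * (1/2) := by
        apply mul_le_mul h1 (by norm_num) (by norm_num) (by positivity)
      linarith
    have hC : (1/2:ℝ)^(1+lam) * (1/2:ℝ)^lam * (1/2) = (1/4:ℝ)^(1+lam) := by
      rw [show (1/4:ℝ) = (1/2)*(1/2) by norm_num,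
        Real.mul_rpow (by norm_num) (by norm_num)]
      rw [Real.rpow_add (by norm_num : (0:ℝ) < 1/2), Real.rpow_one]
      ring
    linarith [hB, hC ▸ hB]
  have hT5 : Tf (1+lam) ≤ 5 * (1/4:ℝ)^(1+lam) := by linarith
  have hTsmall : Tf (1+lam) ≤ 5/256 := by
    have h4 : (1/4:ℝ)^(1+lam) ≤ (1/4:ℝ)^((4:ℕ):ℝ) :=
      Real.rpow_le_rpow_of_exponent_ge (by norm_num) (by norm_num) (by push_cast; linarith)
    rw [Real.rpow_natCast] at h4
    norm_num at h4
    linarith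
  have hqexp : (1/4:ℝ)^lam = Real.exp (-(lam * Real.log 4)) := by
    rw [Real.rpow_def_of_pos (by norm_num)]
    congr 1
    rw [show (1/4:ℝ) = (4:ℝ)⁻¹ by norm_num, Real.log_inv]
    ring
  have hmax : lam * Real.exp (-(lam * Real.log 4)) ≤ Real.exp (-1) / Real.log 4 := by
    have hz : 0 < lam * Real.log 4 := by positivity
    have := mul_exp_neg_le hz
    calc lam * Real.exp (-(lam * Real.log 4))
        = (lam * Real.log 4) * Real.exp (-(lam * Real.log 4)) / Real.log 4 := by
          field_simp
    _ ≤ Real.exp (-1) / Real.log 4 :=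
        div_le_div_of_nonneg_right this hlog4pos.le
  have hq : (1/4:ℝ)^(1+lam) = (1/4) * Real.exp (-(lam * Real.log 4)) := by
    rw [Real.rpow_add (by norm_num : (0:ℝ) < 1/4), Real.rpow_one, hqexp]
  have hee : Real.exp 1 * Real.exp (-1) = 1 := by
    rw [← Real.exp_add]; norm_num
  have hchain : Real.exp 1 * (lam * Tf (1+lam)) ≤ (5/4) * (1 / Real.log 4) := by
    have s1 : lam * Tf (1+lam) ≤ lam * (5 * (1/4:ℝ)^(1+lam)) :=
      mul_le_mul_of_nonneg_left hT5 hl.le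
    have s2 : Real.exp 1 * (lam * Tf (1+lam))
        ≤ Real.exp 1 * (lam * (5 * (1/4:ℝ)^(1+lam))) :=
      mul_le_mul_of_nonneg_left s1 (Real.exp_pos 1).le
    have s3 : Real.exp 1 * (lam * (5 * (1/4:ℝ)^(1+lam)))
        = (5/4) * (Real.exp 1 * (lam * Real.exp (-(lam * Real.log 4)))) := by
      rw [hq]; ring
    have s4 : Real.exp 1 * (lam * Real.exp (-(lam * Real.log 4)))
        ≤ Real.exp 1 * (Real.exp (-1) / Real.log 4) :=
      mul_le_mul_of_nonneg_left hmax (Real.exp_pos 1).le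
    have s5 : Real.exp 1 * (Real.exp (-1) / Real.log 4) = 1 / Real.log 4 := by
      rw [div_eq_mul_inv, ← mul_assoc, hee, one_mul, one_div]
    nlinarith [s2, s3, s4, s5]
  have hlog4lb : (1.3862943606:ℝ) ≤ Real.log 4 := by rw [hlog4]; linarith
  have hfin : (5/4:ℝ) * (1 / Real.log 4) ≤ (5/4) * (1/1.3862943606) := by
    apply mul_le_mul_of_nonneg_left _ (by norm_num)
    exact one_div_le_one_div_of_le (by norm_num) hlog4lb
  have : (5/4:ℝ) * (1/1.3862943606) ≤ 1 - 5/256 := by norm_num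
  linarith

lemma A_core {lam : ℝ} (h0 : 0 < lam) (h7 : lam ≤ 7/10) :
    lam * (1 + Tf (1+lam)) ≤ 1 := by
  rcases le_or_gt lam (1/2) with h | h
  · exact A_int_0 h0 h
  · rcases le_or_gt lam (3/5) with h' | h'
    · exact A_int_1 h.le h'
    · exact A_int_2 h'.le h7

lemma B_core {lam : ℝ} (h7 : 7/10 ≤ lam) :
    Real.exp 1 * (lam * Tf (1+lam)) ≤ 1 - Tf (1+lam) := by
  rcases le_or_gt lam (4/5) with h1 | h1
  · exact B_int_1 h7 h1
  rcases le_or_gt lam (9/10) with h2 | h2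
  · exact B_int_2 h1.le h2
  rcases le_or_gt lam 1 with h3 | h3
  · exact B_int_3 h2.le h3
  rcases le_or_gt lam (6/5) with h4 | h4
  · exact B_int_4 h3.le h4
  rcases le_or_gt lam (3/2) with h5 | h5
  · exact B_int_5 h4.le h5
  rcases le_or_gt lam 2 with h6 | h6
  · exact B_int_6 h5.le h6
  rcases le_or_gt lam 3 with h8 | h8
  · exact B_int_7 h6.le h8
  · exact B_large h8.le

/-! ### Main entropy bound for the rearranged sequence -/

lemma Rr_zero : Rr 0 = 1 := by norm_num [Rr]

lemma rpow_neg_mul_lamt (i : ℕ) (s : ℝ) : (2:ℝ) ^ (-(s * lamt i)) = Rr i ^ s := by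
  rw [show -(s * lamt i) = (-lamt i) * s by ring, Real.rpow_mul (by norm_num : (0:ℝ) ≤ 2),
    two_rpow_neg_lamt]

lemma summable_Rr_all {lam : ℝ} (hl : 0 < lam) : Summable (fun i : ℕ => Rr i ^ (1+lam)) := by
  rw [← summable_nat_add_iff 1]
  simpa using summable_Rr hl 0

lemma tsum_Rr_all {lam : ℝ} (hl : 0 < lam) :
    ∑' i : ℕ, Rr i ^ (1+lam) = 1 + Tf (1+lam) := by
  have h := Summable.sum_add_tsum_nat_add (f := fun i : ℕ => Rr i ^ (1+lam)) 1 (summable_Rr_all hl)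
  rw [Finset.sum_range_one] at h
  rw [← h, Rr_zero, Real.one_rpow]
  rfl

lemma logb_e_pos : 0 < Real.logb 2 (Real.exp 1) := by
  rw [logb_e]
  have := Real.log_two_gt_d9
  positivity

lemma main_bound {q : ℕ → ℝ} (hq0 : ∀ i, 0 ≤ q i) (hq1 : HasSum q 1)
    (hsum : Summable (fun i => q i * lamt i)) {lam : ℝ} (h0 : 0 < lam) :
    ∑' i, -(q i * Real.logb 2 (q i))
      ≤ (1+lam) * (∑' i, q i * lamt i)
        + (Real.logb 2 (Real.exp 1) * Real.exp (-1)) / lam := by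
  set L : ℝ := Real.logb 2 (Real.exp 1) with hL
  have hLpos : 0 < L := logb_e_pos
  set C : ℝ := L * Real.exp (-1) with hC
  have hCpos : 0 < C := by positivity
  set T : ℝ := Tf (1+lam) with hT
  have hTnn : 0 ≤ T := Tf_nonneg
  -- pointwise bound (version A form), gives summability of entropy series
  have hmaj : ∀ i, -(q i * Real.logb 2 (q i))
      ≤ (1+lam)*(q i * lamt i) + C * (Rr i ^ (1+lam)) := by
    intro i
    have h := ent_term_A (hq0 i) ((1+lam) * lamt i)
    rw [rpow_neg_mul_lamt] at h
    calc -(q i * Real.logb 2 (q i))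
        ≤ q i * ((1+lam) * lamt i) + L * (Rr i ^ (1+lam) * Real.exp (-1)) := h
    _ = (1+lam)*(q i * lamt i) + C * (Rr i ^ (1+lam)) := by rw [hC]; ring
  have hentnn : ∀ i, 0 ≤ -(q i * Real.logb 2 (q i)) := by
    intro i
    have hle1 : q i ≤ 1 := le_hasSum hq1 i (fun j _ => hq0 j)
    have : Real.logb 2 (q i) ≤ 0 := Real.logb_nonpos (by norm_num) (hq0 i) hle1
    nlinarith [hq0 i]
  have hmajS : Summable (fun i => (1+lam)*(q i * lamt i) + C * (Rr i ^ (1+lam))) :=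
    (hsum.mul_left _).add ((summable_Rr_all h0).mul_left _)
  have hentS : Summable (fun i => -(q i * Real.logb 2 (q i))) :=
    Summable.of_nonneg_of_le hentnn hmaj hmajS
  have htsum_maj : ∑' i, ((1+lam)*(q i * lamt i) + C * (Rr i ^ (1+lam)))
      = (1+lam) * (∑' i, q i * lamt i) + C * (1 + T) := by
    rw [Summable.tsum_add (hsum.mul_left _) ((summable_Rr_all h0).mul_left _),
      tsum_mul_left, tsum_mul_left, tsum_Rr_all h0]
  rcases le_or_gt lam (7/10) with hA | hB
  · -- version A
    have hAc := A_core h0 hA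
    have h1T : 1 + T ≤ 1/lam := by
      rw [le_div_iff₀ h0]
      nlinarith [hAc]
    have : C * (1 + T) ≤ C / lam := by
      rw [div_eq_mul_inv, ← one_div]
      exact mul_le_mul_of_nonneg_left h1T hCpos.le
    calc ∑' i, -(q i * Real.logb 2 (q i))
        ≤ ∑' i, ((1+lam)*(q i * lamt i) + C * (Rr i ^ (1+lam))) :=
          Summable.tsum_le_tsum hmaj hentS hmajS
    _ = (1+lam) * (∑' i, q i * lamt i) + C * (1 + T) := htsum_maj
    _ ≤ (1+lam) * (∑' i, q i * lamt i) + C / lam := by linarith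
  · -- version B
    have hBc := B_core hB.le
    rw [← hT] at hBc
    have hT1 : T < 1 := by
      by_contra hge
      push_neg at hge
      have hTpos : (0:ℝ) < T := lt_of_lt_of_le one_pos hge
      have h1 : 0 < Real.exp 1 * (lam * T) :=
        mul_pos (Real.exp_pos 1) (mul_pos h0 hTpos)
      linarith
    have h1Tpos : 0 < 1 - T := by linarith
    set c : ℝ := -Real.logb 2 (1 - T) with hc
    have h2c : (2:ℝ)^(-c) = 1 - T := by
      rw [hc, neg_neg]
      exact Real.rpow_logb (by norm_num) (by norm_num) h1Tpos
    have hcnn : 0 ≤ c := by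
      rw [hc, neg_nonneg]
      exact Real.logb_nonpos (by norm_num) h1Tpos.le (by linarith)
    have hlog2pos : 0 < Real.log 2 := by have := Real.log_two_gt_d9; linarith
    have hcle : c ≤ C / lam := by
      have hlogle : -Real.log (1 - T) ≤ T / (1 - T) := by
        have h := Real.log_le_sub_one_of_pos (show 0 < (1-T)⁻¹ by positivity)
        rw [Real.log_inv] at h
        have heq1 : (1-T)⁻¹ - 1 = T/(1-T) := by field_simp; ring
        linarith
      have hTfrac : T / (1 - T) ≤ 1 / (Real.exp 1 * lam) := by
        rw [div_le_div_iff₀ h1Tpos (by positivity)]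
        nlinarith [hBc]
      have heq : (1:ℝ) / (Real.exp 1 * lam) = Real.exp (-1) / lam := by
        rw [Real.exp_neg]
        field_simp
      have hkey : -Real.log (1 - T) ≤ Real.exp (-1) / lam := by
        rw [heq] at hTfrac
        linarith
      have hcval : c = -Real.log (1 - T) / Real.log 2 := by
        rw [hc, Real.logb]
        ring
      have hCrw : C / lam = (Real.exp (-1) / lam) / Real.log 2 := by
        rw [hC, hL, logb_e]
        field_simp
      rw [hcval, hCrw]
      exact div_le_div_of_nonneg_right hkey hlog2pos.le
    -- split sums at index 0
    have hsplitH := Summable.sum_add_tsum_nat_add (f := fun i => -(q i * Real.logb 2 (q i))) 1 hentS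
    rw [Finset.sum_range_one] at hsplitH
    have hsplitL := Summable.sum_add_tsum_nat_add (f := fun i => q i * lamt i) 1 hsum
    rw [Finset.sum_range_one, lamt_zero, mul_zero, zero_add] at hsplitL
    have hqS : Summable q := hq1.summable
    have hsplitq := Summable.sum_add_tsum_nat_add (f := q) 1 hqS
    rw [Finset.sum_range_one, hq1.tsum_eq] at hsplitq
    -- tail pointwise bound
    have htmaj : ∀ i : ℕ, -(q (i+1) * Real.logb 2 (q (i+1)))
        ≤ (1+lam)*(q (i+1) * lamt (i+1)) + L * (Rr (i+1) ^ (1+lam) - q (i+1)) := by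
      intro i
      have h := ent_term_B (hq0 (i+1)) ((1+lam) * lamt (i+1))
      rw [rpow_neg_mul_lamt] at h
      calc -(q (i+1) * Real.logb 2 (q (i+1)))
          ≤ q (i+1) * ((1+lam) * lamt (i+1)) + L * (Rr (i+1) ^ (1+lam) - q (i+1)) := h
      _ = (1+lam)*(q (i+1) * lamt (i+1)) + L * (Rr (i+1) ^ (1+lam) - q (i+1)) := by ring
    have hS1 : Summable (fun i : ℕ => (1+lam)*(q (i+1) * lamt (i+1))) :=
      ((summable_nat_add_iff 1).2 hsum).mul_left _
    have hS2 : Summable (fun i : ℕ => Rr (i+1)^(1+lam)) := by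
      simpa using summable_Rr h0 0
    have hS3 : Summable (fun i : ℕ => q (i+1)) := (summable_nat_add_iff 1).2 hqS
    have hS4 : Summable (fun i : ℕ => L * (Rr (i+1)^(1+lam) - q (i+1))) :=
      (hS2.sub hS3).mul_left _
    have hqtail : ∑' i : ℕ, q (i+1) = 1 - q 0 := by linarith
    have hTrfl : ∑' i : ℕ, Rr (i+1)^(1+lam) = T := rfl
    have htailsum : ∑' i : ℕ, ((1+lam)*(q (i+1)*lamt (i+1)) + L*(Rr (i+1)^(1+lam) - q (i+1)))
        = (1+lam) * (∑' i, q i * lamt i) + L * (T - (1 - q 0)) := by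
      rw [Summable.tsum_add hS1 hS4, tsum_mul_left, tsum_mul_left, Summable.tsum_sub hS2 hS3, hsplitL,
        hqtail, hTrfl]
    have hEtail : Summable (fun i : ℕ => -(q (i+1) * Real.logb 2 (q (i+1)))) :=
      (summable_nat_add_iff 1).2 hentS
    have htail_le := Summable.tsum_le_tsum htmaj hEtail (hS1.add hS4)
    rw [htailsum] at htail_le
    -- head bound
    have hhead := ent_term_B (hq0 0) c
    rw [h2c] at hhead
    have hq0le1 : q 0 ≤ 1 := le_hasSum hq1 0 (fun j _ => hq0 j)
    have hq0c : q 0 * c ≤ c := by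
      calc q 0 * c ≤ 1 * c := mul_le_mul_of_nonneg_right hq0le1 hcnn
      _ = c := one_mul c
    have hLzero : L*((1-T) - q 0) + L*(T - (1 - q 0)) = 0 := by ring
    have := hsplitH
    linarith [hhead, htail_le, hcle, hq0c]

variable {X : Type*}

-- finiteness of strict level sets of p
lemma level_finite {p : X → ℝ} (hp0 : ∀ x, 0 ≤ p x) (hps : HasSum p 1)
    {t : ℝ} (ht : 0 < t) : {x | t < p x}.Finite := by
  by_contra hinf
  have hinf' : {x | t < p x}.Infinite := hinf
  obtain ⟨n, hn⟩ := exists_nat_gt (1/t)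
  obtain ⟨F, hFsub, hFcard⟩ := hinf'.exists_subset_card_eq n
  have hsum_le : ∑ x ∈ F, p x ≤ 1 := sum_le_hasSum F (fun x _ => hp0 x) hps
  have hsum_gt : (n:ℝ) * t ≤ ∑ x ∈ F, p x := by
    calc (n:ℝ) * t = ∑ _x ∈ F, t := by rw [Finset.sum_const, hFcard]; ring
    _ ≤ ∑ x ∈ F, p x := Finset.sum_le_sum (fun x hx => (hFsub hx).le)
  have : (1:ℝ) < n * t := by
    rw [div_lt_iff₀ ht] at hn
    linarith
  linarith

-- threshold construction: for finite level sets, ∃ t ∈ (0, v) with {t < f} = {v ≤ f}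
lemma exists_threshold {f : X → ℝ} {v : ℝ} (hv : 0 < v)
    (hfin : {x | v/2 < f x}.Finite) :
    ∃ t : ℝ, 0 < t ∧ t < v ∧ {x | t < f x} = {x | v ≤ f x} := by
  classical
  set S := hfin.toFinset with hS
  set W : Finset ℝ := insert (v/2) ((S.image f).filter (· < v)) with hW
  have hWne : W.Nonempty := ⟨v/2, Finset.mem_insert_self _ _⟩
  set t := W.max' hWne with htdef
  have htW : t ∈ W := W.max'_mem hWne
  have hlt : ∀ w ∈ W, w < v := by
    intro w hw
    rcases Finset.mem_insert.1 hw with h | h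
    · rw [h]; linarith
    · exact (Finset.mem_filter.1 h).2
  have htv : t < v := hlt t htW
  have hth : v/2 ≤ t := W.le_max' _ (Finset.mem_insert_self _ _)
  refine ⟨t, by linarith, htv, ?_⟩
  ext x
  simp only [Set.mem_setOf_eq]
  constructor
  · intro hx
    by_contra hxv
    push_neg at hxv
    have hxS : x ∈ S := by
      rw [hS, Set.Finite.mem_toFinset]
      exact Set.mem_setOf.2 (by linarith)
    have hfxW : f x ∈ W := by
      rw [hW]
      apply Finset.mem_insert_of_mem
      exact Finset.mem_filter.2 ⟨Finset.mem_image_of_mem f hxS, hxv⟩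
    have := W.le_max' _ hfxW
    rw [← htdef] at this
    linarith
  · intro hx; linarith

lemma eq_card_ge {p : X → ℝ} {q : ℕ → ℝ}
    (hpfin : ∀ t : ℝ, 0 < t → {x | t < p x}.Finite)
    (hqfin : ∀ t : ℝ, 0 < t → {i | t < q i}.Finite)
    (hc : ∀ t : ℝ, 0 < t → {x | t < p x}.ncard = {i | t < q i}.ncard)
    {v : ℝ} (hv : 0 < v) :
    {x | v ≤ p x}.ncard = {i | v ≤ q i}.ncard := by
  obtain ⟨t1, ht1p, ht1v, ht1e⟩ := exists_threshold hv (hpfin (v/2) (by linarith))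
  obtain ⟨t2, ht2p, ht2v, ht2e⟩ := exists_threshold hv (hqfin (v/2) (by linarith))
  set t := max t1 t2 with htdef
  have htp : 0 < t := lt_of_lt_of_le ht1p (le_max_left _ _)
  have htv : t < v := max_lt ht1v ht2v
  have hpe : {x | t < p x} = {x | v ≤ p x} := by
    ext x
    constructor
    · intro hx
      have h1 : x ∈ {x | t1 < p x} := by
        simp only [Set.mem_setOf_eq] at hx ⊢
        exact lt_of_le_of_lt (le_max_left _ _) hx
      rw [ht1e] at h1
      exact h1
    · intro hx
      simp only [Set.mem_setOf_eq] at hx ⊢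
      linarith
  have hqe : {i | t < q i} = {i | v ≤ q i} := by
    ext i
    constructor
    · intro hx
      have h1 : i ∈ {i | t2 < q i} := by
        simp only [Set.mem_setOf_eq] at hx ⊢
        exact lt_of_le_of_lt (le_max_right _ _) hx
      rw [ht2e] at h1
      exact h1
    · intro hx
      simp only [Set.mem_setOf_eq] at hx ⊢
      linarith
  rw [← hpe, ← hqe]
  exact hc t htp

lemma eq_card_eq {p : X → ℝ} {q : ℕ → ℝ}
    (hpfin : ∀ t : ℝ, 0 < t → {x | t < p x}.Finite)
    (hqfin : ∀ t : ℝ, 0 < t → {i | t < q i}.Finite)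
    (hc : ∀ t : ℝ, 0 < t → {x | t < p x}.ncard = {i | t < q i}.ncard)
    {v : ℝ} (hv : 0 < v) :
    {x | p x = v}.ncard = {i | q i = v}.ncard := by
  have hfinp : {x | v ≤ p x}.Finite :=
    (hpfin (v/2) (by linarith)).subset (fun x hx => by
      simp only [Set.mem_setOf_eq] at hx ⊢; linarith)
  have hfinq : {i | v ≤ q i}.Finite :=
    (hqfin (v/2) (by linarith)).subset (fun i hi => by
      simp only [Set.mem_setOf_eq] at hi ⊢; linarith)
  have hsubp : {x | v < p x} ⊆ {x | v ≤ p x} := fun x hx => by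
    simp only [Set.mem_setOf_eq] at hx ⊢; exact hx.le
  have hsubq : {i | v < q i} ⊆ {i | v ≤ q i} := fun i hi => by
    simp only [Set.mem_setOf_eq] at hi ⊢; exact hi.le
  have hdiffp : {x | p x = v} = {x | v ≤ p x} \ {x | v < p x} := by
    ext x
    simp only [Set.mem_setOf_eq, Set.mem_diff, not_lt]
    constructor
    · intro h; exact ⟨le_of_eq h.symm, le_of_eq h⟩
    · intro ⟨h1, h2⟩; exact le_antisymm h2 h1
  have hdiffq : {i | q i = v} = {i | v ≤ q i} \ {i | v < q i} := by
    ext i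
    simp only [Set.mem_setOf_eq, Set.mem_diff, not_lt]
    constructor
    · intro h; exact ⟨le_of_eq h.symm, le_of_eq h⟩
    · intro ⟨h1, h2⟩; exact le_antisymm h2 h1
  rw [hdiffp, hdiffq, Set.ncard_diff hsubp (hfinp.subset hsubp), Set.ncard_diff hsubq (hfinq.subset hsubq),
    eq_card_ge hpfin hqfin hc hv, hc v hv]

lemma rearrange_equiv {p : X → ℝ} {q : ℕ → ℝ}
    (hpfin : ∀ t : ℝ, 0 < t → {x | t < p x}.Finite)
    (hqfin : ∀ t : ℝ, 0 < t → {i | t < q i}.Finite)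
    (hc : ∀ t : ℝ, 0 < t → {x | t < p x}.ncard = {i | t < q i}.ncard) :
    ∃ e : {i : ℕ // 0 < q i} ≃ {x : X // 0 < p x}, ∀ i, p (e i).1 = q i.1 := by
  classical
  set Qs := {i : ℕ // 0 < q i}
  set Ps := {x : X // 0 < p x}
  set fq : Qs → {v : ℝ // 0 < v} := fun i => ⟨q i.1, i.2⟩ with hfq
  set fp : Ps → {v : ℝ // 0 < v} := fun x => ⟨p x.1, x.2⟩ with hfp
  -- fibers are equivalent to the plain level sets
  have fibq : ∀ v : {v : ℝ // 0 < v}, {i : Qs // fq i = v} ≃ {i : ℕ // q i = v.1} := by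
    intro v
    refine ⟨fun a => ⟨a.1.1, congrArg Subtype.val a.2⟩,
      fun b => ⟨⟨b.1, by rw [b.2]; exact v.2⟩, Subtype.ext b.2⟩, ?_, ?_⟩
    · intro a; ext; rfl
    · intro b; ext; rfl
  have fibp : ∀ v : {v : ℝ // 0 < v}, {x : Ps // fp x = v} ≃ {x : X // p x = v.1} := by
    intro v
    refine ⟨fun a => ⟨a.1.1, congrArg Subtype.val a.2⟩,
      fun b => ⟨⟨b.1, by rw [b.2]; exact v.2⟩, Subtype.ext b.2⟩, ?_, ?_⟩
    · intro a; ext; rfl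
    · intro b; ext; rfl
  -- cardinalities agree
  have hcards : ∀ v : {v : ℝ // 0 < v},
      Nonempty ({i : ℕ // q i = v.1} ≃ {x : X // p x = v.1}) := by
    intro v
    have hfinq' : {i : ℕ | q i = v.1}.Finite :=
      ((hqfin (v.1/2) (by have := v.2; linarith)).subset (fun i hi => by
        simp only [Set.mem_setOf_eq] at hi ⊢
        have := v.2; linarith))
    have hfinp' : {x : X | p x = v.1}.Finite :=
      ((hpfin (v.1/2) (by have := v.2; linarith)).subset (fun x hx => by
        simp only [Set.mem_setOf_eq] at hx ⊢
        have := v.2; linarith))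
    have : Finite {i : ℕ // q i = v.1} := hfinq'.to_subtype
    have : Finite {x : X // p x = v.1} := hfinp'.to_subtype
    rw [← Finite.card_eq]
    have e1 : Nat.card {i : ℕ // q i = v.1} = {i : ℕ | q i = v.1}.ncard :=
      Nat.card_coe_set_eq _
    have e2 : Nat.card {x : X // p x = v.1} = {x : X | p x = v.1}.ncard :=
      Nat.card_coe_set_eq _
    rw [e1, e2]
    exact (eq_card_eq hpfin hqfin hc v.2).symm
  have fib : ∀ v : {v : ℝ // 0 < v}, {i : Qs // fq i = v} ≃ {x : Ps // fp x = v} := by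
    intro v
    exact (fibq v).trans ((Classical.choice (hcards v)).trans (fibp v).symm)
  set e : Qs ≃ Ps :=
    (Equiv.sigmaFiberEquiv fq).symm.trans
      ((Equiv.sigmaCongrRight fib).trans (Equiv.sigmaFiberEquiv fp)) with he
  refine ⟨e, ?_⟩
  intro i
  have hstep : e i = ((fib (fq i)) ⟨i, rfl⟩).1 := rfl
  have hprop := ((fib (fq i)) ⟨i, rfl⟩).2
  rw [hstep]
  have := congrArg Subtype.val hprop
  exact this

lemma transfer {p : X → ℝ} {q : ℕ → ℝ} (hp0 : ∀ x, 0 ≤ p x) (hq0 : ∀ i, 0 ≤ q i)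
    (e : {i : ℕ // 0 < q i} ≃ {x : X // 0 < p x}) (he : ∀ i, p (e i).1 = q i.1)
    (F : ℝ → ℝ) (hF0 : F 0 = 0) :
    (∑' x, F (p x) = ∑' i, F (q i))
      ∧ ∀ a : ℝ, (HasSum (fun x => F (p x)) a ↔ HasSum (fun i => F (q i)) a) := by
  classical
  set g : ℕ → ℝ := fun i => F (q i) with hg
  have hqpos : ∀ a : Function.support g, 0 < q a.1 := by
    intro a
    rcases lt_or_eq_of_le (hq0 a.1) with h | h
    · exact h
    · exfalso
      apply a.2
      show F (q a.1) = 0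
      rw [← h, hF0]
  set j : Function.support g → X := fun a => (e ⟨a.1, hqpos a⟩).1 with hj
  have hinj : Function.Injective j := by
    intro a b hab
    have h1 : e ⟨a.1, hqpos a⟩ = e ⟨b.1, hqpos b⟩ := Subtype.ext hab
    have h2 := e.injective h1
    have h3 : a.1 = b.1 := Subtype.mk_eq_mk.1 h2
    exact Subtype.ext h3
  have hsupp : Function.support (fun x => F (p x)) ⊆ Set.range j := by
    intro x hx
    have hx' : F (p x) ≠ 0 := hx
    have hpx : 0 < p x := by
      rcases lt_or_eq_of_le (hp0 x) with h | h
      · exact h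
      · exfalso; apply hx'; rw [← h, hF0]
    set i := e.symm ⟨x, hpx⟩ with hi
    have h3 := he i
    rw [hi, e.apply_symm_apply] at h3
    -- h3 : p x = q i.1  (as p (⟨x,hpx⟩).1 = p x)
    have hgne : g i.1 ≠ 0 := by
      show F (q i.1) ≠ 0
      rw [← h3]
      exact hx'
    refine ⟨⟨i.1, hgne⟩, ?_⟩
    show (e ⟨i.1, _⟩).1 = x
    have h4 : (⟨i.1, hqpos ⟨i.1, hgne⟩⟩ : {i : ℕ // 0 < q i}) = i := Subtype.ext rfl
    rw [h4, hi, e.apply_symm_apply]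
  have hfg : ∀ a : Function.support g, F (p (j a)) = g a.1 := by
    intro a
    show F (p (e ⟨a.1, hqpos a⟩).1) = F (q a.1)
    rw [he ⟨a.1, hqpos a⟩]
  exact ⟨tsum_eq_tsum_of_ne_zero_bij j hinj hsupp hfg,
    fun a => hasSum_iff_hasSum_of_ne_zero_bij j hinj hsupp hfg⟩

lemma q_nonneg {q : ℕ → ℝ} (hqa : Antitone q)
    (hsum : Summable (fun i => q i * lamt i)) : ∀ i, 0 ≤ q i := by
  by_contra hneg
  push_neg at hneg
  obtain ⟨j, hj⟩ := hneg
  have hev := (hsum.tendsto_atTop_zero).eventually_const_lt hj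
  obtain ⟨N, hN⟩ := Filter.eventually_atTop.1 hev
  set i := max N (max j 1) with hidef
  have hiN : N ≤ i := le_max_left _ _
  have hij : j ≤ i := (le_max_left _ _).trans (le_max_right _ _)
  have hi1 : 1 ≤ i := (le_max_right _ _).trans (le_max_right _ _)
  have hqi : q i ≤ q j := hqa hij
  have hlam := lamt_ge_two i hi1
  have h1 : q i * lamt i ≤ q i * 2 := by nlinarith
  have h2 : q i * 2 ≤ q j * 2 := by nlinarith
  have := hN i hiN
  nlinarith

lemma q_level_finite {q : ℕ → ℝ} (hqa : Antitone q)
    (hsum : Summable (fun i => q i * lamt i)) {t : ℝ} (ht : 0 < t) :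
    {i | t < q i}.Finite := by
  by_contra hinf
  have hinf' : {i | t < q i}.Infinite := hinf
  have hev := (hsum.tendsto_atTop_zero).eventually_lt_const (show (0:ℝ) < 2*t by linarith)
  obtain ⟨N, hN⟩ := Filter.eventually_atTop.1 hev
  obtain ⟨i, hiS, hiN⟩ := hinf'.exists_gt (max N 1)
  have hi1 : 1 ≤ i := lt_of_le_of_lt (le_max_right _ _) hiN |>.le
  have hiN' : N ≤ i := (lt_of_le_of_lt (le_max_left _ _) hiN).le
  have hqi : t < q i := hiS
  have hlam := lamt_ge_two i hi1
  have h1 : 2 * t ≤ q i * lamt i := by nlinarith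
  have := hN i hiN'
  linarith

end S11

def IsPMF {X : Type*} (p : X → ℝ) : Prop := (∀ x, 0 ≤ p x) ∧ HasSum p 1

def IsDescRearrange {X : Type*} (p : X → ℝ) (q : ℕ → ℝ) : Prop :=
  Antitone q ∧ ∀ t : ℝ, 0 < t → {x | t < p x}.ncard = {i | t < q i}.ncard

noncomputable def shEnt {X : Type*} (p : X → ℝ) : ℝ :=
  ∑' x, -(p x * Real.logb 2 (p x))

/-- `H(X) ≤ Λ(X) + 2√(Λ(X) (log₂ e)/e)`. -/
theorem stmt11 {X : Type*} (p : X → ℝ) (q : ℕ → ℝ)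
    (hpmf : IsPMF p) (hq : IsDescRearrange p q)
    (hsum : Summable (fun i => q i * lamt i)) :
    shEnt p ≤ (∑' i : ℕ, q i * lamt i)
      + 2 * Real.sqrt ((∑' i : ℕ, q i * lamt i) * Real.logb 2 (Real.exp 1) / Real.exp 1) := by
  classical
  obtain ⟨hp0, hps⟩ := hpmf
  obtain ⟨hqa, hcard⟩ := hq
  have hq0 : ∀ i, 0 ≤ q i := S11.q_nonneg hqa hsum
  have hqfin : ∀ t : ℝ, 0 < t → {i | t < q i}.Finite :=
    fun t ht => S11.q_level_finite hqa hsum ht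
  have hpfin : ∀ t : ℝ, 0 < t → {x | t < p x}.Finite :=
    fun t ht => S11.level_finite hp0 hps ht
  obtain ⟨e, he⟩ := S11.rearrange_equiv hpfin hqfin hcard
  have hid := S11.transfer hp0 hq0 e he (fun t => t) rfl
  have hq1 : HasSum q 1 := (hid.2 1).1 hps
  have hent := (S11.transfer hp0 hq0 e he (fun t => -(t * Real.logb 2 t)) (by norm_num)).1
  have hshe : shEnt p = ∑' i, -(q i * Real.logb 2 (q i)) := hent
  set Lam := ∑' i : ℕ, q i * lamt i with hLam
  have hLnn : 0 ≤ Lam := tsum_nonneg (fun i => mul_nonneg (hq0 i) (S11.lamt_nonneg i))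
  rcases eq_or_lt_of_le hLnn with h0 | hpos
  · -- Lam = 0 : degenerate case
    have hterm0 : ∀ i, 1 ≤ i → q i = 0 := by
      intro i hi
      have hle : q i * lamt i ≤ Lam :=
        le_hasSum hsum.hasSum i (fun j _ => mul_nonneg (hq0 j) (S11.lamt_nonneg j))
      have h2 := S11.lamt_ge_two i hi
      by_contra hne
      have hqip : 0 < q i := lt_of_le_of_ne (hq0 i) (Ne.symm hne)
      nlinarith
    have hsingle : ∑' i, q i = q 0 :=
      tsum_eq_single 0 (fun i hi => hterm0 i (Nat.one_le_iff_ne_zero.2 hi))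
    have hq01 : q 0 = 1 := by
      rw [← hsingle]
      exact hq1.tsum_eq
    have hall : ∀ i, -(q i * Real.logb 2 (q i)) = 0 := by
      intro i
      rcases Nat.eq_zero_or_pos i with h | h
      · rw [h, hq01]
        simp
      · rw [hterm0 i h]
        simp
    have hHq : ∑' i, -(q i * Real.logb 2 (q i)) = 0 := by
      calc ∑' i, -(q i * Real.logb 2 (q i)) = ∑' _i : ℕ, (0:ℝ) := tsum_congr hall
      _ = 0 := tsum_zero
    rw [hshe, hHq, ← h0]
    simp
  · -- Lam > 0 : main case
    set L := Real.logb 2 (Real.exp 1) with hLdef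
    have hLpos : 0 < L := S11.logb_e_pos
    set c0 := L * Real.exp (-1) with hc0
    have hc0pos : 0 < c0 := by positivity
    set lam := Real.sqrt (c0 / Lam) with hlamdef
    have hlam : 0 < lam := Real.sqrt_pos.2 (by positivity)
    have hlam2 : lam^2 = c0 / Lam := Real.sq_sqrt (by positivity)
    have hmb := S11.main_bound hq0 hq1 hsum hlam
    have hkey : c0 / lam = lam * Lam := by
      have h1 : c0 = lam^2 * Lam := by
        rw [hlam2]
        field_simp
      rw [h1]
      field_simp
    have hsq : lam * Lam = Real.sqrt (Lam * L / Real.exp 1) := by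
      have hexp : Real.exp (-1) = (Real.exp 1)⁻¹ := Real.exp_neg 1
      have h2 : Lam * L / Real.exp 1 = (lam * Lam)^2 := by
        rw [show (lam*Lam)^2 = lam^2 * Lam^2 by ring, hlam2, hc0, hexp]
        field_simp
      rw [h2, Real.sqrt_sq (by positivity)]
    rw [hshe]
    calc ∑' i, -(q i * Real.logb 2 (q i)) ≤ (1+lam)*Lam + c0/lam := hmb
    _ = Lam + (lam*Lam + c0/lam) := by ring
    _ = Lam + 2*(lam*Lam) := by rw [hkey]; ring
    _ = Lam + 2*Real.sqrt (Lam * L / Real.exp 1) := by rw [hsq]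
end

section
/- For any λ > 1, the sum c = Σ_{x=1}^∞ 2^{−λ(x log₂ x − (x−1) log₂(x−1))} converges and satisfies c ≤ 1 + e^{−λ}/(λ−1). -/
open Real intervalIntegral

lemma key_ineq (l : ℝ) (hl : 1 < l) (x : ℝ) (hx : 1 ≤ x) :
    Real.exp (-(l * ((x+1) * Real.log (x+1) - x * Real.log x))) ≤
      Real.exp (-l) / (l - 1) * (x ^ (1-l) - (x+1) ^ (1-l)) := by
  have hx0 : (0:ℝ) < x := by linarith
  set A : ℝ := (x+1) * Real.log (x+1) - x * Real.log x with hA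
  set m : ℝ := -(l * A) with hm
  have h0 : (0:ℝ) ∉ Set.uIcc x (x+1) := by
    rw [Set.uIcc_of_le (by linarith)]
    intro h; exact absurd h.1 (by linarith)
  -- pointwise bound
  have hpt : ∀ t ∈ Set.Icc x (x+1),
      Real.exp m * ((-l - m + 1) + (-l) * Real.log t) ≤ Real.exp (-l) * t ^ (-l) := by
    intro t ht
    have ht0 : (0:ℝ) < t := lt_of_lt_of_le hx0 ht.1
    have : Real.exp (-l) * t ^ (-l) = Real.exp ((-l - m) + m + (-l) * Real.log t) := by
      rw [Real.rpow_def_of_pos ht0, ← Real.exp_add]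
      ring_nf
    rw [this]
    have := Real.add_one_le_exp ((-l - m) + (-l) * Real.log t)
    calc Real.exp m * ((-l - m + 1) + (-l) * Real.log t)
        = Real.exp m * (((-l - m) + (-l) * Real.log t) + 1) := by ring
      _ ≤ Real.exp m * Real.exp ((-l - m) + (-l) * Real.log t) := by
          exact mul_le_mul_of_nonneg_left (Real.add_one_le_exp _) (Real.exp_pos m).le
      _ = Real.exp ((-l - m) + m + (-l) * Real.log t) := by
          rw [← Real.exp_add]; ring_nf
  -- integrability
  have hle : x ≤ x + 1 := by linarith
  have hlogInt : IntervalIntegrable (fun t => Real.log t) MeasureTheory.volume x (x+1) :=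
    ((Real.continuousOn_log.mono (fun t ht => ne_of_mem_of_not_mem ht h0))).intervalIntegrable
  have hint1 : IntervalIntegrable (fun t => Real.exp m * ((-l - m + 1) + (-l) * Real.log t))
      MeasureTheory.volume x (x+1) := by
    apply IntervalIntegrable.const_mul
    exact intervalIntegrable_const.add (hlogInt.const_mul _)
  have hint2 : IntervalIntegrable (fun t => Real.exp (-l) * t ^ (-l))
      MeasureTheory.volume x (x+1) := by
    apply IntervalIntegrable.const_mul
    apply ContinuousOn.intervalIntegrable
    apply ContinuousOn.rpow_const continuousOn_id
    intro t ht
    exact Or.inl (ne_of_mem_of_not_mem ht h0)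
  -- integral inequality
  have hmono := intervalIntegral.integral_mono_on hle hint1 hint2
    (fun t ht => hpt t ht)
  -- compute LHS integral
  have hLHS : (∫ t in x..(x+1), Real.exp m * ((-l - m + 1) + (-l) * Real.log t)) = Real.exp m := by
    rw [intervalIntegral.integral_const_mul,
      intervalIntegral.integral_add intervalIntegrable_const (hlogInt.const_mul _),
      intervalIntegral.integral_const_mul, intervalIntegral.integral_const,
      integral_log]
    simp only [smul_eq_mul]
    have : (x + 1) * Real.log (x + 1) - x * Real.log x - (x + 1) + x = A - 1 := by
      rw [hA]; ring
    rw [this, hm]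
    ring
  -- compute RHS integral
  have hRHS : (∫ t in x..(x+1), Real.exp (-l) * t ^ (-l))
      = Real.exp (-l) / (l - 1) * (x ^ (1-l) - (x+1) ^ (1-l)) := by
    have h2 : (1:ℝ) - l ≠ 0 := by intro h; apply absurd hl; simp; linarith
    have h3 : l - 1 ≠ 0 := by intro h; apply absurd hl; simp; linarith
    rw [intervalIntegral.integral_const_mul, integral_rpow (Or.inr ⟨by intro h; apply absurd hl; simp; linarith [neg_eq_iff_eq_neg.mp h], h0⟩)]
    have h1 : -l + 1 = 1 - l := by ring
    rw [h1]
    field_simp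
    ring
  rw [hLHS, hRHS] at hmono
  exact hmono

/-- for `λ > 1`, `c = ∑_{x≥1} 2^{−λ(x log₂ x − (x−1) log₂ (x−1))}`
converges and `c ≤ 1 + e^{−λ}/(λ−1)`. Here the term for `x = i+1` is
`2^{-λ · lamt i}`. -/
theorem stmt12 (l : ℝ) (hl : 1 < l) :
    Summable (fun i : ℕ => (2 : ℝ) ^ (-(l * lamt i))) ∧
      (∑' i : ℕ, (2 : ℝ) ^ (-(l * lamt i))) ≤ 1 + Real.exp (-l) / (l - 1) := by
  set a : ℕ → ℝ := fun i => ((i:ℝ)+1) * Real.log ((i:ℝ)+1) - (i:ℝ) * Real.log (i:ℝ) with ha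
  have hlog2 : Real.log 2 ≠ 0 := ne_of_gt (Real.log_pos (by norm_num))
  have hfe : (fun i : ℕ => (2 : ℝ) ^ (-(l * lamt i))) = fun i => Real.exp (-(l * a i)) := by
    funext i
    rw [Real.rpow_def_of_pos (by norm_num : (0:ℝ) < 2)]
    congr 1
    simp only [lamt, Real.logb, ha]
    field_simp
  set c : ℝ := Real.exp (-l) / (l - 1) with hc
  have hc0 : 0 ≤ c := by
    apply div_nonneg (Real.exp_pos _).le; linarith
  set h : ℕ → ℝ := fun j => ((j:ℝ)) ^ (1-l) with hh
  have hbound : ∀ i : ℕ, Real.exp (-(l * a (i+1))) ≤ c * (h (i+1) - h (i+2)) := by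
    intro i
    have hx : (0:ℝ) ≤ (i:ℝ) := Nat.cast_nonneg i
    have := key_ineq l hl ((i:ℝ)+1) (by linarith)
    simp only [ha, hh, hc]
    push_cast
    convert this using 3 <;> push_cast <;> ring_nf
  have hps : ∀ N, ∑ i ∈ Finset.range N, Real.exp (-(l * a i)) ≤ 1 + c := by
    intro N
    cases N with
    | zero => simp; linarith
    | succ M =>
      rw [Finset.sum_range_succ']
      have h0 : Real.exp (-(l * a 0)) = 1 := by
        simp [ha]
      rw [h0]
      have hsum : ∑ i ∈ Finset.range M, Real.exp (-(l * a (i+1)))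
          ≤ c * (h 1 - h (M+1)) := by
        calc ∑ i ∈ Finset.range M, Real.exp (-(l * a (i+1)))
            ≤ ∑ i ∈ Finset.range M, c * (h (i+1) - h (i+2)) :=
              Finset.sum_le_sum (fun i _ => hbound i)
          _ = c * ∑ i ∈ Finset.range M, ((fun j => h (j+1)) i - (fun j => h (j+1)) (i+1)) := by
              rw [← Finset.mul_sum]
          _ = c * (h 1 - h (M+1)) := by rw [Finset.sum_range_sub']
      have h1 : h 1 = 1 := by simp [hh]
      have hM : 0 ≤ h (M+1) := by simp only [hh]; positivity
      have : c * (h 1 - h (M+1)) ≤ c := by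
        rw [h1]
        nlinarith
      linarith
  constructor
  · rw [hfe]
    exact summable_of_sum_range_le (fun n => (Real.exp_pos _).le) hps
  · rw [hfe]
    exact Real.tsum_le_of_sum_range_le (fun n => (Real.exp_pos _).le) hps
end

section
/- The optimal one-to-one code length L(X) := Σ_{i≥1} p_X↓(i)⌊log₂ i⌋ satisfies L(X) ≤ Λ(X), i.e., E[⌊log₂ X⌋] ≤ E[X log₂ X − (X−1) log₂ (X−1)] when X ∈ ℕ has a nonincreasing pmf. -/
lemma natlog_le_lamt (i : ℕ) : (Nat.log 2 (i + 1) : ℝ) ≤ lamt i := by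
  have h2 : (1:ℝ) < 2 := one_lt_two
  have hpow : (2:ℝ) ^ (Nat.log 2 (i + 1)) ≤ (i + 1 : ℝ) := by
    have := Nat.pow_log_le_self 2 (Nat.succ_ne_zero i)
    exact_mod_cast this
  have h1 : (Nat.log 2 (i + 1) : ℝ) ≤ Real.logb 2 ((i : ℝ) + 1) := by
    have : Real.logb 2 ((2:ℝ) ^ (Nat.log 2 (i + 1))) ≤ Real.logb 2 ((i : ℝ) + 1) :=
      Real.logb_le_logb_of_le h2 (by positivity) (by push_cast; exact hpow)
    simpa [Real.logb_pow, Real.logb_self_eq_one] using this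
  have h3 : (i : ℝ) * Real.logb 2 (i : ℝ) ≤ (i : ℝ) * Real.logb 2 ((i : ℝ) + 1) := by
    rcases Nat.eq_zero_or_pos i with h | h
    · simp [h]
    · apply mul_le_mul_of_nonneg_left _ (by positivity)
      apply Real.logb_le_logb_of_le h2 (by exact_mod_cast h)
      linarith
  have : Real.logb 2 ((i : ℝ) + 1) ≤ lamt i := by
    unfold lamt; nlinarith [h3]
  linarith

/-- `L(X) ≤ Λ(X)` for `X ∈ ℕ` with nonincreasing pmf:
`∑_i p(i) ⌊log₂ i⌋ ≤ ∑_i p(i)(i log₂ i − (i−1) log₂ (i−1))`.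
Here `p i` is the probability of the value `i + 1`. -/
theorem stmt13 (p : ℕ → ℝ) (hpmf : IsPMF p) (hmono : Antitone p)
    (hsum : Summable (fun i => p i * lamt i)) :
    ∑' i : ℕ, p i * (Nat.log 2 (i + 1) : ℝ) ≤ ∑' i : ℕ, p i * lamt i := by
  have hterm : ∀ i, p i * (Nat.log 2 (i + 1) : ℝ) ≤ p i * lamt i := fun i =>
    mul_le_mul_of_nonneg_left (natlog_le_lamt i) (hpmf.1 i)
  have hsum1 : Summable (fun i => p i * (Nat.log 2 (i + 1) : ℝ)) :=
    Summable.of_nonneg_of_le (fun i => mul_nonneg (hpmf.1 i) (by positivity)) hterm hsum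
  exact Summable.tsum_le_tsum hterm hsum1 hsum
end

section
/- Conditioning property: for discrete random variables X, Y, the minimum of Λ(U) over random variables U (with joint distribution p_{U|X,Y}) satisfying H(X|Y,U)=0 equals Λ(X|Y) := E_Y[Λ(p_{X|Y}(·|Y))]. -/
lemma lamt_zero : lamt 0 = 0 := by simp [lamt]

lemma lamt_nonneg (i : ℕ) : 0 ≤ lamt i := by
  unfold lamt
  rcases Nat.eq_zero_or_pos i with h | h
  · simp [h]
  have h1 : (1:ℝ) ≤ (i:ℝ) := by exact_mod_cast h
  have : (i:ℝ) * Real.logb 2 i ≤ ((i:ℝ)+1) * Real.logb 2 ((i:ℝ)+1) := by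
    apply mul_le_mul (by linarith) _ _ (by linarith)
    · exact Real.logb_le_logb_of_le (by norm_num) (by linarith) (by linarith)
    · exact Real.logb_nonneg (by norm_num) h1
  linarith

lemma lamt_mono : Monotone lamt := by
  apply monotone_nat_of_le_succ
  intro i
  have hc := Real.convexOn_mul_log.2 (Set.mem_Ici.2 (by positivity : (0:ℝ) ≤ (i:ℝ)))
    (Set.mem_Ici.2 (by positivity : (0:ℝ) ≤ (i:ℝ)+2)) (by norm_num : (0:ℝ) ≤ (1:ℝ)/2)
    (by norm_num : (0:ℝ) ≤ (1:ℝ)/2) (by norm_num)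
  simp only [smul_eq_mul] at hc
  have hmid : (1:ℝ)/2 * (i:ℝ) + (1:ℝ)/2 * ((i:ℝ)+2) = (i:ℝ)+1 := by ring
  rw [hmid] at hc
  have hlog2 : 0 < Real.log 2 := Real.log_pos (by norm_num)
  have h2 : ((i:ℝ)+1) * Real.logb 2 ((i:ℝ)+1) ≤
      (1/2) * ((i:ℝ) * Real.logb 2 i) + (1/2) * (((i:ℝ)+2) * Real.logb 2 ((i:ℝ)+2)) := by
    have hinv : (0:ℝ) ≤ (Real.log 2)⁻¹ := by positivity
    have h3 := mul_le_mul_of_nonneg_right hc hinv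
    unfold Real.logb
    ring_nf
    ring_nf at h3
    linarith
  unfold lamt
  push_cast
  ring_nf
  ring_nf at h2
  linarith [h2]

lemma log_le_lamt (i : ℕ) (h : 1 ≤ i) : Real.logb 2 i ≤ lamt i := by
  unfold lamt
  have h1 : (1:ℝ) ≤ (i:ℝ) := by exact_mod_cast h
  have : (i:ℝ) * Real.logb 2 i ≤ (i:ℝ) * Real.logb 2 ((i:ℝ)+1) :=
    mul_le_mul_of_nonneg_left (Real.logb_le_logb_of_le (by norm_num) (by linarith) (by linarith)) (by linarith)
  have h2 : Real.logb 2 i ≤ Real.logb 2 ((i:ℝ)+1) :=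
    Real.logb_le_logb_of_le (by norm_num) (by linarith) (by linarith)
  nlinarith [this, h2]
lemma lamt_tendsto : Filter.Tendsto lamt Filter.atTop Filter.atTop := by
  apply Filter.tendsto_atTop_mono' _ _
    ((Real.tendsto_logb_atTop (by norm_num : (1:ℝ) < 2)).comp
      (tendsto_natCast_atTop_atTop (R := ℝ)))
  filter_upwards [Filter.eventually_ge_atTop 1] with i hi
  exact log_le_lamt i hi

lemma antitone_nonneg_of_summable {s : ℕ → ℝ} (hs : Antitone s)
    (hsum : Summable (fun i => s i * lamt i)) (i : ℕ) : 0 ≤ s i := by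
  by_contra h
  push_neg at h
  have h1 : Filter.Tendsto (fun j => s i * lamt j) Filter.atTop Filter.atBot := by
    simpa using Filter.Tendsto.const_mul_atTop_of_neg h lamt_tendsto
  have h2 := hsum.tendsto_atTop_zero
  have h3 : ∀ᶠ j in Filter.atTop, s j * lamt j < -1 := by
    filter_upwards [h1.eventually (Filter.eventually_lt_atBot (-1)),
      Filter.eventually_ge_atTop i] with j hj hij
    exact lt_of_le_of_lt (mul_le_mul_of_nonneg_right (hs hij) (lamt_nonneg j)) hj
  have h4 : ∀ᶠ j in Filter.atTop, -1 < s j * lamt j := by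
    have := h2.eventually (eventually_gt_nhds (by norm_num : (-1:ℝ) < 0))
    exact this
  obtain ⟨j, hj1, hj2⟩ := (h3.and h4).exists
  linarith

lemma finite_level {A : Type*} {p : A → ℝ} (hp : Summable p) {t : ℝ} (ht : 0 < t) :
    {x | t < p x}.Finite := by
  have h := hp.tendsto_cofinite_zero (Ioo_mem_nhds (by linarith : -t < 0) ht)
  have h' : {x | p x ∈ Set.Ioo (-t) t}ᶜ.Finite := by
    have := Filter.mem_cofinite.mp (h : p ⁻¹' (Set.Ioo (-t) t) ∈ Filter.cofinite)
    simpa [Set.preimage] using this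
  exact h'.subset (fun x hx => by simp only [Set.mem_setOf_eq, Set.mem_Ioo, Set.mem_compl_iff] at *; intro hc; linarith [hc.2])

lemma infinite_level_antitone {s : ℕ → ℝ} (hs : Antitone s) {t : ℝ}
    (h : {i | t < s i}.Infinite) (i : ℕ) : t < s i := by
  obtain ⟨j, hj, hij⟩ := h.exists_gt i
  exact lt_of_lt_of_le hj (hs hij.le)

/-- For `t > 0`, the level set of `s` is finite and has the same card as that of `p`. -/
lemma level_finite_card {A : Type*} {p : A → ℝ} {s : ℕ → ℝ} (hp : Summable p)
    (hs : Antitone s) (hx : ∃ x, 0 < p x)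
    (hcard : ∀ t : ℝ, 0 < t → {x | t < p x}.ncard = {i | t < s i}.ncard)
    {t : ℝ} (ht : 0 < t) : {i | t < s i}.Finite ∧ {x | t < p x}.ncard = {i | t < s i}.ncard := by
  refine ⟨?_, hcard t ht⟩
  by_contra hinf
  replace hinf : {i | t < s i}.Infinite := hinf
  obtain ⟨x₀, hx₀⟩ := hx
  set t' := min t (p x₀) / 2 with ht'def
  have ht'pos : 0 < t' := by positivity
  have ht'lt : t' ≤ t := by
    have : min t (p x₀) ≤ t := min_le_left _ _
    linarith
  have hsuniv : {i | t' < s i}.Infinite := by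
    apply Set.Infinite.mono _ hinf
    intro i hi
    exact lt_of_le_of_lt ht'lt hi
  have h1 : {i | t' < s i}.ncard = 0 := hsuniv.ncard
  have h2 : x₀ ∈ {x | t' < p x} := by
    simp only [Set.mem_setOf_eq, ht'def]
    have : min t (p x₀) ≤ p x₀ := min_le_right _ _
    linarith
  have h3 : {x | t' < p x}.ncard ≠ 0 := by
    have : 0 < {x | t' < p x}.ncard :=
      Set.Nonempty.ncard_pos (finite_level hp ht'pos) ⟨x₀, h2⟩
    omega
  exact h3 ((hcard t' ht'pos).trans h1)

/-- Step 1: find a common threshold turning `≥ c` into `> t`. -/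
lemma exists_threshold {A : Type*} {p : A → ℝ} {s : ℕ → ℝ}
    (hfp : ∀ t : ℝ, 0 < t → {x | t < p x}.Finite)
    (hfs : ∀ t : ℝ, 0 < t → {i | t < s i}.Finite)
    {c : ℝ} (hc : 0 < c) :
    ∃ t, 0 < t ∧ t < c ∧ {x | t < p x} = {x | c ≤ p x} ∧ {i | t < s i} = {i | c ≤ s i} := by
  classical
  have hF : {x | c/2 < p x}.Finite := hfp _ (by linarith)
  have hG : {i | c/2 < s i}.Finite := hfs _ (by linarith)
  have hV : (insert (c/2) (((p '' {x | c/2 < p x}) ∪ (s '' {i | c/2 < s i})) ∩ Set.Iio c)).Finite :=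
    Set.Finite.insert _ (Set.Finite.inter_of_left ((hF.image p).union (hG.image s)) _)
  obtain ⟨t, htV, htmax⟩ := Set.Finite.exists_maximalFor id _ hV ⟨c/2, Set.mem_insert _ _⟩
  have hmax : ∀ a ∈ (insert (c/2) (((p '' {x | c/2 < p x}) ∪ (s '' {i | c/2 < s i})) ∩ Set.Iio c)), a ≤ t := by
    intro a ha
    by_contra hlt
    push_neg at hlt
    exact absurd (htmax ha hlt.le) (not_le.2 hlt)
  have hthalf : c/2 ≤ t := hmax _ (Set.mem_insert _ _)
  have htc : t < c := by
    rcases htV with h | h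
    · rw [h]; linarith
    · exact h.2
  refine ⟨t, by linarith, htc, ?_, ?_⟩
  · ext x
    simp only [Set.mem_setOf_eq]
    constructor
    · intro h
      by_contra hlt
      push_neg at hlt
      have hx : x ∈ {x | c/2 < p x} := by simp only [Set.mem_setOf_eq]; linarith
      have : p x ≤ t := hmax _ (Set.mem_insert_of_mem _ ⟨Set.mem_union_left _ ⟨x, hx, rfl⟩, hlt⟩)
      linarith
    · intro h; linarith
  · ext i
    simp only [Set.mem_setOf_eq]
    constructor
    · intro h
      by_contra hlt
      push_neg at hlt
      have hi : i ∈ {i | c/2 < s i} := by simp only [Set.mem_setOf_eq]; linarith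
      have : s i ≤ t := hmax _ (Set.mem_insert_of_mem _ ⟨Set.mem_union_right _ ⟨i, hi, rfl⟩, hlt⟩)
      linarith
    · intro h; linarith

/-- Step 2: fibers have equal (finite) cardinality. -/
lemma fiber_card_eq {A : Type*} {p : A → ℝ} {s : ℕ → ℝ}
    (hfp : ∀ t : ℝ, 0 < t → {x | t < p x}.Finite)
    (hfs : ∀ t : ℝ, 0 < t → {i | t < s i}.Finite)
    (hcard : ∀ t : ℝ, 0 < t → {x | t < p x}.ncard = {i | t < s i}.ncard)
    {c : ℝ} (hc : 0 < c) : {x | p x = c}.ncard = {i | s i = c}.ncard := by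
  obtain ⟨t, ht, htc, hP, hS⟩ := exists_threshold hfp hfs hc
  have h1 : {x | p x = c} = {x | t < p x} \ {x | c < p x} := by
    ext x; rw [hP]; simp only [Set.mem_setOf_eq, Set.mem_diff, Set.mem_setOf_eq]
    constructor
    · rintro rfl; exact ⟨le_refl _, lt_irrefl _⟩
    · rintro ⟨h1, h2⟩; push_neg at h2; linarith
  have h2 : {i | s i = c} = {i | t < s i} \ {i | c < s i} := by
    ext i; rw [hS]; simp only [Set.mem_setOf_eq, Set.mem_diff, Set.mem_setOf_eq]
    constructor
    · rintro rfl; exact ⟨le_refl _, lt_irrefl _⟩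
    · rintro ⟨h1, h2⟩; push_neg at h2; linarith
  have hsub1 : {x | c < p x} ⊆ {x | t < p x} := fun x hx => by
    simp only [Set.mem_setOf_eq] at *; linarith
  have hsub2 : {i | c < s i} ⊆ {i | t < s i} := fun i hi => by
    simp only [Set.mem_setOf_eq] at *; linarith
  rw [h1, h2, Set.ncard_diff hsub1 (hfp c hc), Set.ncard_diff hsub2 (hfs c hc),
    hcard t ht, hcard c hc]

/-- The matching lemma: a value-preserving bijection between supports. -/
lemma exists_matching {A : Type*} {p : A → ℝ} {s : ℕ → ℝ}
    (hfp : ∀ t : ℝ, 0 < t → {x | t < p x}.Finite)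
    (hfs : ∀ t : ℝ, 0 < t → {i | t < s i}.Finite)
    (hcard : ∀ t : ℝ, 0 < t → {x | t < p x}.ncard = {i | t < s i}.ncard) :
    ∃ e : A → ℕ, Set.BijOn e {x | 0 < p x} {i | 0 < s i} ∧ ∀ x, 0 < p x → s (e x) = p x := by
  classical
  -- fibers
  have hPfin : ∀ c : ℝ, 0 < c → {x | p x = c}.Finite := fun c hc =>
    (hfp (c/2) (by linarith)).subset (fun x hx => by
      simp only [Set.mem_setOf_eq] at *; linarith)
  have hSfin : ∀ c : ℝ, 0 < c → {i | s i = c}.Finite := fun c hc =>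
    (hfs (c/2) (by linarith)).subset (fun i hi => by
      simp only [Set.mem_setOf_eq] at *; linarith)
  -- fiber equivs
  have hE : ∀ c : ℝ, 0 < c → ∃ f : A → ℕ,
      Set.BijOn f {x | p x = c} {i | s i = c} := by
    intro c hc
    have h1 := fiber_card_eq hfp hfs hcard hc
    apply Set.Finite.exists_bijOn_of_encard_eq (hPfin c hc)
    rw [(hPfin c hc).encard_eq_coe_toFinset_card, (hSfin c hc).encard_eq_coe_toFinset_card,
      ← Set.ncard_eq_toFinset_card _ (hPfin c hc), ← Set.ncard_eq_toFinset_card _ (hSfin c hc), h1]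
  set F : ℝ → A → ℕ := fun c => if hc : 0 < c then (hE c hc).choose else fun _ => 0 with hF
  have hFbij : ∀ c : ℝ, 0 < c → Set.BijOn (F c) {x | p x = c} {i | s i = c} := by
    intro c hc
    simp only [hF, dif_pos hc]
    exact (hE c hc).choose_spec
  refine ⟨fun x => F (p x) x, ⟨?_, ?_, ?_⟩, ?_⟩
  · -- MapsTo
    intro x hx
    simp only [Set.mem_setOf_eq] at *
    have := (hFbij (p x) hx).mapsTo (by simp : x ∈ {x' | p x' = p x})
    simp only [Set.mem_setOf_eq] at this
    rw [this]; exact hx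
  · -- InjOn
    intro x hx x' hx' hee
    simp only [Set.mem_setOf_eq] at hx hx'
    have h1 : s (F (p x) x) = p x := by
      have := (hFbij (p x) hx).mapsTo (by simp : x ∈ {x' | p x' = p x})
      simpa using this
    have h2 : s (F (p x') x') = p x' := by
      have := (hFbij (p x') hx').mapsTo (by simp : x' ∈ {z | p z = p x'})
      simpa using this
    simp only [] at hee
    have hpp : p x = p x' := by rw [← h1, ← h2, hee]
    have hee' : F (p x) x = F (p x) x' := by rw [hee, hpp]
    exact (hFbij (p x) hx).injOn (by simp) (show x' ∈ {z | p z = p x} from hpp.symm) hee'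
  · -- SurjOn
    intro i hi
    simp only [Set.mem_setOf_eq] at hi
    have hSne : ({j | s j = s i}).Nonempty := ⟨i, rfl⟩
    have hcard1 : 0 < {j | s j = s i}.ncard := hSne.ncard_pos (hSfin _ hi)
    have hcard2 : 0 < {x | p x = s i}.ncard := by
      rw [fiber_card_eq hfp hfs hcard hi]; exact hcard1
    have hPne : ({x | p x = s i}).Nonempty := by
      rcases Set.eq_empty_or_nonempty {x | p x = s i} with h | h
      · rw [h] at hcard2; simp at hcard2
      · exact h
    obtain ⟨x, hx, hfx⟩ := (hFbij (s i) hi).surjOn (by simp : i ∈ {j | s j = s i})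
    simp only [Set.mem_setOf_eq] at hx
    refine ⟨x, by simp only [Set.mem_setOf_eq]; rw [hx]; exact hi, ?_⟩
    simp only [Set.mem_setOf_eq]
    rw [hx]
    exact hfx
  · -- value preservation
    intro x hx
    have := (hFbij (p x) hx).mapsTo (by simp : x ∈ {x' | p x' = p x})
    simpa using this
lemma one_le_lamt (i : ℕ) (h : 2 ≤ i) : 1 ≤ lamt i := by
  calc (1:ℝ) = Real.logb 2 2 := by simp
  _ ≤ Real.logb 2 i := Real.logb_le_logb_of_le (by norm_num) (by norm_num) (by exact_mod_cast h)
  _ ≤ lamt i := log_le_lamt i (by omega)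

lemma summable_of_summable_mul_lamt {r : ℕ → ℝ} (h0 : ∀ i, 0 ≤ r i)
    (hsum : Summable (fun i => r i * lamt i)) : Summable r := by
  rw [← summable_nat_add_iff 2]
  apply Summable.of_nonneg_of_le (fun i => h0 _) (fun i => ?_)
    ((summable_nat_add_iff 2).2 hsum)
  calc r (i + 2) = r (i + 2) * 1 := by ring
  _ ≤ r (i + 2) * lamt (i + 2) := by
      apply mul_le_mul_of_nonneg_left (one_le_lamt _ (by omega)) (h0 _)

/-- Sum over a finite set of indices of an antitone nonneg sequence is at most
the sum over an initial segment of the same size. -/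
lemma sum_antitone_le {r : ℕ → ℝ} (hr : Antitone r) (h0 : ∀ i, 0 ≤ r i) (A : Finset ℕ) :
    ∑ i ∈ A, r i ≤ ∑ k ∈ Finset.range A.card, r k := by
  classical
  generalize hn : A.card = n
  induction n generalizing A with
  | zero => simp [Finset.card_eq_zero.1 hn]
  | succ n ih =>
    have hA : A.Nonempty := Finset.card_pos.1 (by omega)
    set a := A.max' hA with ha
    have hsub : A ⊆ Finset.range (a + 1) := by
      intro i hi
      simp only [Finset.mem_range]
      exact Nat.lt_succ_of_le (A.le_max' i hi)
    have hcard : n + 1 ≤ a + 1 := by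
      calc n + 1 = A.card := hn.symm
      _ ≤ (Finset.range (a+1)).card := Finset.card_le_card hsub
      _ = a + 1 := Finset.card_range _
    have hna : n ≤ a := by omega
    have herase : (A.erase a).card = n := by
      have h := Finset.card_erase_of_mem (s := A) (a := a) (A.max'_mem hA); omega
    calc ∑ i ∈ A, r i = ∑ i ∈ A.erase a, r i + r a := by
          rw [Finset.sum_erase_add A _ (A.max'_mem hA)]
    _ ≤ ∑ k ∈ Finset.range n, r k + r n :=
          add_le_add (ih _ herase) (hr hna)
    _ = ∑ k ∈ Finset.range (n+1), r k := by rw [Finset.sum_range_succ]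

open ENNReal

/-- ofReal (lamt k) as a sum of increments. -/
lemma ofReal_lamt_eq (k : ℕ) :
    ENNReal.ofReal (lamt k) = ∑' j, if j < k then ENNReal.ofReal (lamt (j+1) - lamt j) else 0 := by
  classical
  have h1 : lamt k = ∑ j ∈ Finset.range k, (lamt (j+1) - lamt j) := by
    rw [Finset.sum_range_sub lamt, lamt_zero, sub_zero]
  rw [h1, ENNReal.ofReal_sum_of_nonneg (fun j _ => sub_nonneg.2 (lamt_mono (Nat.le_succ _)))]
  rw [tsum_eq_sum (s := Finset.range k) (fun j hj => if_neg (by simpa using hj))]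
  exact Finset.sum_congr rfl (fun j hj => (if_pos (by simpa using hj)).symm)

/-- The infinite rearrangement inequality: pairing an antitone nonneg sequence with `lamt`
in the natural order minimizes the sum among injections on the support. -/
lemma rearrange_le {r : ℕ → ℝ} (hr : Antitone r) (h0 : ∀ i, 0 ≤ r i)
    (hsum : Summable r) {κ : ℕ → ℕ} (hκ : Set.InjOn κ {i | 0 < r i}) :
    ∑' i, ENNReal.ofReal (r i) * ENNReal.ofReal (lamt i) ≤
    ∑' i, ENNReal.ofReal (r i) * ENNReal.ofReal (lamt (κ i)) := by
  classical
  set R : ℕ → ℝ≥0∞ := fun i => ENNReal.ofReal (r i) with hR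
  set D : ℕ → ℝ≥0∞ := fun j => ENNReal.ofReal (lamt (j+1) - lamt j) with hD
  -- the key counting estimate
  have key : ∀ j : ℕ, (∑' i, if κ i ≤ j then R i else 0) ≤ ∑' i, if i ≤ j then R i else 0 := by
    intro j
    have hSfin : ({i | 0 < r i} ∩ κ ⁻¹' (Set.Iic j)).Finite := by
      apply Set.Finite.of_finite_image _ (hκ.mono Set.inter_subset_left)
      exact (Set.finite_Iic j).subset (Set.image_subset_iff.2 (fun i hi => hi.2))
    have hLHS : (∑' i, if κ i ≤ j then R i else 0) =
        ∑ i ∈ hSfin.toFinset, R i := by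
      rw [tsum_eq_sum (s := hSfin.toFinset) ?_]
      · apply Finset.sum_congr rfl
        intro i hi
        simp only [Set.Finite.mem_toFinset, Set.mem_inter_iff, Set.mem_preimage,
          Set.mem_Iic] at hi
        exact if_pos hi.2
      · intro i hi
        simp only [Set.Finite.mem_toFinset, Set.mem_inter_iff, Set.mem_preimage,
          Set.mem_Iic, Set.mem_setOf_eq, not_and] at hi
        by_cases hik : κ i ≤ j
        · rw [if_pos hik]
          have : ¬ 0 < r i := fun hpos => hi hpos hik
          have : r i = 0 := le_antisymm (not_lt.1 this) (h0 i)
          simp [hR, this]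
        · exact if_neg hik
    have hRHS : (∑' i, if i ≤ j then R i else 0) = ∑ i ∈ Finset.range (j+1), R i := by
      rw [tsum_eq_sum (s := Finset.range (j+1)) (fun i hi => if_neg (by simp at hi; omega))]
      exact Finset.sum_congr rfl (fun i hi => if_pos (by simp at hi; omega))
    rw [hLHS, hRHS]
    have hcard : hSfin.toFinset.card ≤ j + 1 := by
      have := Finset.card_le_card_of_injOn (s := hSfin.toFinset)
        (t := Finset.range (j+1)) (f := κ) ?_ ?_
      · simpa using this
      · intro i hi
        simp only [Finset.mem_coe, Set.Finite.mem_toFinset, Set.mem_inter_iff, Set.mem_preimage,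
          Set.mem_Iic] at hi
        simp only [Finset.mem_coe, Finset.mem_range]
        omega
      · intro a ha b hb hab
        have ha' : a ∈ ({i | 0 < r i} ∩ κ ⁻¹' Set.Iic j) := by
          rw [← Set.Finite.mem_toFinset hSfin]; exact ha
        have hb' : b ∈ ({i | 0 < r i} ∩ κ ⁻¹' Set.Iic j) := by
          rw [← Set.Finite.mem_toFinset hSfin]; exact hb
        exact hκ ha'.1 hb'.1 hab
    -- move to real sums
    have e1 : ∀ (B : Finset ℕ), ∑ i ∈ B, R i = ENNReal.ofReal (∑ i ∈ B, r i) := by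
      intro B
      rw [ENNReal.ofReal_sum_of_nonneg (fun i _ => h0 i)]
    rw [e1, e1]
    apply ENNReal.ofReal_le_ofReal
    calc ∑ i ∈ hSfin.toFinset, r i ≤ ∑ k ∈ Finset.range hSfin.toFinset.card, r k :=
          sum_antitone_le hr h0 _
    _ ≤ ∑ i ∈ Finset.range (j+1), r i := by
          apply Finset.sum_le_sum_of_subset_of_nonneg
          · exact Finset.range_subset_range.2 hcard
          · exact fun i _ _ => h0 i
  -- total mass is finite
  have hT : (∑' i, R i) ≠ ⊤ := by
    rw [← ENNReal.ofReal_tsum_of_nonneg h0 hsum]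
    exact ENNReal.ofReal_ne_top
  -- complementary form of the key estimate
  have key2 : ∀ j : ℕ, (∑' i, if j < i then R i else 0) ≤ ∑' i, if j < κ i then R i else 0 := by
    intro j
    have split : ∀ (f : ℕ → ℕ),
        (∑' i, if f i ≤ j then R i else 0) + (∑' i, if j < f i then R i else 0) = ∑' i, R i := by
      intro f
      rw [← ENNReal.tsum_add]
      apply tsum_congr
      intro i
      by_cases h : f i ≤ j
      · simp [if_pos h, if_neg (not_lt.2 h)]
      · simp [if_neg h, if_pos (not_le.1 h)]
    have h1 := split κ
    have h2 := split id
    have hb : (∑' i, if κ i ≤ j then R i else 0) ≠ ⊤ :=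
      ne_top_of_le_ne_top hT (le_trans (Summable.tsum_le_tsum (fun i => by
        by_cases h : κ i ≤ j
        · rw [if_pos h]
        · rw [if_neg h]; exact zero_le) ENNReal.summable ENNReal.summable) le_rfl)
    have : (∑' i, if j < i then R i else 0) + (∑' i, if κ i ≤ j then R i else 0) ≤
        (∑' i, if j < κ i then R i else 0) + (∑' i, if κ i ≤ j then R i else 0) := by
      calc (∑' i, if j < i then R i else 0) + (∑' i, if κ i ≤ j then R i else 0)
          ≤ (∑' i, if j < i then R i else 0) + (∑' i, if i ≤ j then R i else 0) := by
            exact add_le_add le_rfl (key j)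
      _ = ∑' i, R i := by rw [add_comm]; exact h2
      _ = (∑' i, if j < κ i then R i else 0) + (∑' i, if κ i ≤ j then R i else 0) := by
            rw [add_comm]; exact h1.symm
    exact ENNReal.le_of_add_le_add_right hb this
  -- main computation
  have expand : ∀ (f : ℕ → ℕ),
      (∑' i, R i * ENNReal.ofReal (lamt (f i))) = ∑' j, D j * ∑' i, if j < f i then R i else 0 := by
    intro f
    calc (∑' i, R i * ENNReal.ofReal (lamt (f i)))
        = ∑' i, ∑' j, (if j < f i then R i * D j else 0) := by
          apply tsum_congr; intro i
          rw [ofReal_lamt_eq (f i), ← ENNReal.tsum_mul_left]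
          apply tsum_congr; intro j
          by_cases h : j < f i
          · simp [if_pos h, hD]
          · simp [if_neg h]
    _ = ∑' j, ∑' i, (if j < f i then R i * D j else 0) := ENNReal.tsum_comm
    _ = ∑' j, D j * ∑' i, if j < f i then R i else 0 := by
          apply tsum_congr; intro j
          rw [← ENNReal.tsum_mul_left]
          apply tsum_congr; intro i
          by_cases h : j < f i
          · simp [if_pos h, mul_comm]
          · simp [if_neg h]
  calc (∑' i, R i * ENNReal.ofReal (lamt i)) = ∑' j, D j * ∑' i, if j < i then R i else 0 := by
        simpa using expand id
  _ ≤ ∑' j, D j * ∑' i, if j < κ i then R i else 0 := by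
        apply Summable.tsum_le_tsum _ ENNReal.summable ENNReal.summable
        intro j
        exact mul_le_mul_right (key2 j) _
  _ = ∑' i, R i * ENNReal.ofReal (lamt (κ i)) := (expand κ).symm
open ENNReal

lemma tsum_bijOn_ennreal {A B : Type*} {S : Set A} {T : Set B} {e : A → B}
    (he : Set.BijOn e S T) {F : A → ℝ≥0∞} {G : B → ℝ≥0∞}
    (hF : ∀ x ∉ S, F x = 0) (hG : ∀ i ∉ T, G i = 0)
    (heq : ∀ x ∈ S, G (e x) = F x) : ∑' x, F x = ∑' i, G i := by
  rw [← tsum_subtype_eq_of_support_subset (s := S) (fun x hx => by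
        by_contra hxS; exact hx (hF x hxS)),
      ← tsum_subtype_eq_of_support_subset (s := T) (fun i hi => by
        by_contra hiT; exact hi (hG i hiT))]
  rw [← Equiv.tsum_eq (Set.BijOn.equiv e he) (fun i : T => G i)]
  apply tsum_congr
  intro x
  have : (Set.BijOn.equiv e he x : B) = e x := rfl
  rw [this, heq x x.2]

/-- conditioning property. With `w` the joint pmf of `(X,Y)`,
`pY` its `Y`-marginal and `r y` the descending rearrangement of `p_{X|Y}(·|y)`,
the quantity `Λ(X|Y) = E_Y[Λ(p_{X|Y}(·|Y))]` is the minimum of `Λ(U)` over all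
(jointly distributed) random variables `U` with `H(X|Y,U) = 0`:
it is a lower bound, and it is attained. -/
theorem stmt17 {X Y : Type*} (w : X × Y → ℝ) (hw : IsPMF w)
    (pY : Y → ℝ) (hpY : ∀ y, pY y = ∑' x, w (x, y))
    (r : Y → ℕ → ℝ)
    (hr : ∀ y, 0 < pY y → IsDescRearrange (fun x => w (x, y) / pY y) (r y))
    (hrs : ∀ y, Summable (fun i => r y i * lamt i))
    (hout : Summable (fun y => pY y * ∑' i, r y i * lamt i)) :
    (∀ (W : Type) (m : X × Y × W → ℝ), IsPMF m →
      (∀ x y, w (x, y) = ∑' v, m (x, y, v)) →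
      (∃ g : Y × W → X, ∀ x y v, 0 < m (x, y, v) → g (y, v) = x) →
      ∀ s : ℕ → ℝ,
        IsDescRearrange (fun v : W => ∑' z : X × Y, m (z.1, z.2, v)) s →
        Summable (fun i => s i * lamt i) →
        (∑' y, pY y * ∑' i, r y i * lamt i) ≤ ∑' i, s i * lamt i) ∧
    (∃ (W : Type) (m : X × Y × W → ℝ) (s : ℕ → ℝ), IsPMF m ∧
      (∀ x y, w (x, y) = ∑' v, m (x, y, v)) ∧
      (∃ g : Y × W → X, ∀ x y v, 0 < m (x, y, v) → g (y, v) = x) ∧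
      IsDescRearrange (fun v : W => ∑' z : X × Y, m (z.1, z.2, v)) s ∧
      Summable (fun i => s i * lamt i) ∧
      (∑' i, s i * lamt i) = ∑' y, pY y * ∑' i, r y i * lamt i) := by
  classical
  obtain ⟨hwnn, hwsum⟩ := hw
  haveI hXne : Nonempty X := by
    by_contra h
    rw [not_nonempty_iff] at h
    exact one_ne_zero (hwsum.unique hasSum_empty)
  have hpYnn : ∀ y, 0 ≤ pY y := fun y => by
    rw [hpY y]; exact tsum_nonneg (fun x => hwnn _)
  have hslice : ∀ y, Summable (fun x => w (x, y)) := fun y =>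
    hwsum.summable.comp_injective (fun a b hab => by simpa using congrArg Prod.fst hab)
  have hwle : ∀ x y, w (x, y) ≤ pY y := fun x y => by
    rw [hpY y]
    exact Summable.le_tsum (hslice y) x (fun x' _ => hwnn _)
  have hpsum : ∀ y, Summable (fun x => w (x, y) / pY y) := fun y => (hslice y).div_const _
  have hpnn : ∀ y x, 0 ≤ w (x, y) / pY y := fun y x => div_nonneg (hwnn _) (hpYnn y)
  have hptsum : ∀ y, 0 < pY y → ∑' x, w (x, y) / pY y = 1 := fun y hy => by
    rw [tsum_div_const, ← hpY y, div_self (ne_of_gt hy)]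
  have hpex : ∀ y, 0 < pY y → ∃ x, 0 < w (x, y) / pY y := by
    intro y hy
    by_contra h
    push_neg at h
    have hz : ∀ x, w (x, y) / pY y = 0 := fun x => le_antisymm (h x) (hpnn y x)
    have h0 : ∑' x, w (x, y) / pY y = 0 := by simp [hz]
    rw [hptsum y hy] at h0
    exact one_ne_zero h0
  have hple1 : ∀ y x, w (x, y) / pY y ≤ 1 := by
    intro y x
    rcases lt_or_ge 0 (pY y) with hy | hy
    · rw [div_le_one hy]; exact hwle x y
    · have h0 : pY y = 0 := le_antisymm hy (hpYnn y)
      simp [h0]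
  have hrnn : ∀ y, 0 < pY y → ∀ i, 0 ≤ r y i := fun y hy =>
    antitone_nonneg_of_summable (hr y hy).1 (hrs y)
  have hfs : ∀ y, 0 < pY y → ∀ t : ℝ, 0 < t → {i | t < r y i}.Finite := fun y hy t ht =>
    (level_finite_card (hpsum y) (hr y hy).1 (hpex y hy) (hr y hy).2 ht).1
  have hrsum : ∀ y, 0 < pY y → Summable (r y) := fun y hy =>
    summable_of_summable_mul_lamt (hrnn y hy) (hrs y)
  have hEy : ∀ y, 0 < pY y → ∃ e : X → ℕ,
      Set.BijOn e {x | 0 < w (x, y) / pY y} {i | 0 < r y i} ∧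
      ∀ x, 0 < w (x, y) / pY y → r y (e x) = w (x, y) / pY y := fun y hy =>
    exists_matching (fun t ht => finite_level (hpsum y) ht) (hfs y hy) (hr y hy).2
  have hw0 : ∀ x y, ¬ (0 < pY y) → w (x, y) = 0 := fun x y hy =>
    le_antisymm (le_trans (hwle x y) (not_lt.1 hy)) (hwnn _)
  have htermnn : ∀ y, 0 ≤ pY y * ∑' i, r y i * lamt i := by
    intro y
    rcases lt_or_ge 0 (pY y) with hy | hy
    · exact mul_nonneg (hpYnn y) (tsum_nonneg (fun i => mul_nonneg (hrnn y hy i) (lamt_nonneg i)))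
    · have h0 : pY y = 0 := le_antisymm hy (hpYnn y)
      rw [h0, zero_mul]
  constructor
  · -- PART 1 : lower bound
    rintro W m hm hmarg ⟨g, hg⟩ s hsd hssum
    obtain ⟨hmnn, hmsum⟩ := hm
    obtain ⟨hs_anti, hs_card⟩ := hsd
    set q : W → ℝ := fun v => ∑' z : X × Y, m (z.1, z.2, v) with hqdef
    have hmslicev : ∀ v, Summable (fun z : X × Y => m (z.1, z.2, v)) := fun v =>
      hmsum.summable.comp_injective (fun a b hab => by
        have h1 := congrArg (fun t : X × Y × W => t.1) hab
        have h2 := congrArg (fun t : X × Y × W => t.2.1) hab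
        simp only at h1 h2
        exact Prod.ext h1 h2)
    have hqnn : ∀ v, 0 ≤ q v := fun v => tsum_nonneg (fun z => hmnn _)
    have hmxy : ∀ x y, Summable (fun v => m (x, y, v)) := fun x y =>
      hmsum.summable.comp_injective (fun a b hab => by
        simpa using congrArg (fun t : X × Y × W => t.2.2) hab)
    have hqge : ∀ x y v, m (x, y, v) ≤ q v := fun x y v =>
      Summable.le_tsum (hmslicev v) (x, y) (fun z _ => hmnn _)
    set e1 : W × (X × Y) ≃ X × Y × W :=
      (Equiv.prodComm W (X × Y)).trans (Equiv.prodAssoc X Y W) with he1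
    have hM' : Summable (fun p : W × (X × Y) => m (e1 p)) :=
      hmsum.summable.comp_injective e1.injective
    have hqeq : ∀ v, q v = ∑' z : X × Y, m (e1 (v, z)) := fun v => rfl
    have hqsummable : Summable q := by
      have h := hM'.prod
      exact h.congr (fun v => (hqeq v).symm)
    have hqtsum : ∑' v, q v = 1 := by
      calc ∑' v, q v = ∑' (v) (z : X × Y), m (e1 (v, z)) := tsum_congr hqeq
      _ = ∑' p : W × (X × Y), m (e1 p) := (Summable.tsum_prod hM').symm
      _ = ∑' z, m z := e1.tsum_eq m
      _ = 1 := hmsum.tsum_eq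
    have hqex : ∃ v, 0 < q v := by
      by_contra h
      push_neg at h
      have hz : ∀ v, q v = 0 := fun v => le_antisymm (h v) (hqnn v)
      have h0 : ∑' v, q v = 0 := by simp [hz]
      rw [hqtsum] at h0
      exact one_ne_zero h0
    have hsnn : ∀ i, 0 ≤ s i := antitone_nonneg_of_summable hs_anti hssum
    have hfsq : ∀ t : ℝ, 0 < t → {i | t < s i}.Finite := fun t ht =>
      (level_finite_card hqsummable hs_anti hqex hs_card ht).1
    obtain ⟨ρ, hρbij, hρval⟩ :=
      exists_matching (fun t ht => finite_level hqsummable ht) hfsq hs_card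
    -- the per-y estimate
    have main : ∀ y, 0 < pY y →
        (∑' i, ENNReal.ofReal (r y i * lamt i)) ≤
        (ENNReal.ofReal (pY y))⁻¹ *
          ∑' (x : X) (v : W), ENNReal.ofReal (m (x, y, v)) * ENNReal.ofReal (lamt (ρ v)) := by
      intro y hy
      obtain ⟨ey, heybij, heyval⟩ := hEy y hy
      have hmex : ∀ x, 0 < w (x, y) / pY y → ∃ v, 0 < m (x, y, v) := by
        intro x hx
        by_contra h
        push_neg at h
        have hz : ∀ v, m (x, y, v) = 0 := fun v => le_antisymm (h v) (hmnn _)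
        have hwz : w (x, y) = 0 := by rw [hmarg x y]; simp [hz]
        rw [hwz] at hx
        simp at hx
      set ι : X → ℕ := fun x => sInf (ρ '' {v | 0 < m (x, y, v)}) with hι
      have hιspec : ∀ x, 0 < w (x, y) / pY y → ∃ v, 0 < m (x, y, v) ∧ ρ v = ι x := by
        intro x hx
        obtain ⟨v, hv⟩ := hmex x hx
        have hne : (ρ '' {v | 0 < m (x, y, v)}).Nonempty := ⟨ρ v, v, hv, rfl⟩
        obtain ⟨v', hv', hρv'⟩ := Nat.sInf_mem hne
        exact ⟨v', hv', hρv'⟩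
      have hιle : ∀ x v, 0 < m (x, y, v) → ι x ≤ ρ v := fun x v hv =>
        Nat.sInf_le ⟨v, hv, rfl⟩
      have hvq : ∀ x v, 0 < m (x, y, v) → 0 < q v := fun x v hv =>
        lt_of_lt_of_le hv (hqge x y v)
      have hιinj : Set.InjOn ι {x | 0 < w (x, y) / pY y} := by
        intro a ha b hb hab
        obtain ⟨va, hva, hρa⟩ := hιspec a ha
        obtain ⟨vb, hvb, hρb⟩ := hιspec b hb
        have hρρ : ρ va = ρ vb := by rw [hρa, hρb, hab]
        have hvv : va = vb := hρbij.injOn (hvq a va hva) (hvq b vb hvb) hρρ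
        have h1 := hg a y va hva
        have h2 := hg b y vb hvb
        rw [hvv] at h1
        rw [← h1, h2]
      set κ : ℕ → ℕ := fun i =>
        if h : 0 < r y i then ι (Function.invFunOn ey {x | 0 < w (x, y) / pY y} i) else i with hκ
      have hκey : ∀ x, 0 < w (x, y) / pY y → κ (ey x) = ι x := by
        intro x hx
        have h1 : 0 < r y (ey x) := by rw [heyval x hx]; exact hx
        rw [hκ]
        simp only [dif_pos h1]
        congr 1
        exact heybij.injOn.leftInvOn_invFunOn hx
      have hκinj : Set.InjOn κ {i | 0 < r y i} := by
        intro i hi j hj hij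
        obtain ⟨xi, hxi, hexi⟩ := heybij.surjOn hi
        obtain ⟨xj, hxj, hexj⟩ := heybij.surjOn hj
        rw [← hexi, ← hexj, hκey xi hxi, hκey xj hxj] at hij
        rw [← hexi, ← hexj, hιinj hxi hxj hij]
      have step1 : (∑' i, ENNReal.ofReal (r y i) * ENNReal.ofReal (lamt i)) ≤
          ∑' i, ENNReal.ofReal (r y i) * ENNReal.ofReal (lamt (κ i)) :=
        rearrange_le (hr y hy).1 (hrnn y hy) (hrsum y hy) hκinj
      have step2 : (∑' i, ENNReal.ofReal (r y i) * ENNReal.ofReal (lamt (κ i))) =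
          ∑' x, ENNReal.ofReal (w (x, y) / pY y) * ENNReal.ofReal (lamt (ι x)) := by
        refine (tsum_bijOn_ennreal heybij ?_ ?_ ?_).symm
        · intro x hx
          simp only [Set.mem_setOf_eq] at hx
          have h0 : w (x, y) / pY y = 0 := le_antisymm (not_lt.1 hx) (hpnn y x)
          rw [h0]
          simp
        · intro i hi
          simp only [Set.mem_setOf_eq] at hi
          have h0 : r y i = 0 := le_antisymm (not_lt.1 hi) (hrnn y hy i)
          rw [h0]
          simp
        · intro x hx
          rw [heyval x hx, hκey x hx]
      have step3 : (∑' x, ENNReal.ofReal (w (x, y) / pY y) * ENNReal.ofReal (lamt (ι x))) ≤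
          (ENNReal.ofReal (pY y))⁻¹ *
            ∑' (x : X) (v : W), ENNReal.ofReal (m (x, y, v)) * ENNReal.ofReal (lamt (ρ v)) := by
        rw [← ENNReal.tsum_mul_left]
        apply Summable.tsum_le_tsum _ ENNReal.summable ENNReal.summable
        intro x
        have h1 : ENNReal.ofReal (w (x, y) / pY y) =
            (ENNReal.ofReal (pY y))⁻¹ * ENNReal.ofReal (w (x, y)) := by
          rw [div_eq_mul_inv, ENNReal.ofReal_mul (hwnn _), ENNReal.ofReal_inv_of_pos hy, mul_comm]
        rw [h1, mul_assoc]
        apply mul_le_mul_right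
        have h2 : ENNReal.ofReal (w (x, y)) = ∑' v, ENNReal.ofReal (m (x, y, v)) := by
          rw [hmarg x y]
          exact ENNReal.ofReal_tsum_of_nonneg (fun v => hmnn _) (hmxy x y)
        rw [h2, ← ENNReal.tsum_mul_right]
        apply Summable.tsum_le_tsum _ ENNReal.summable ENNReal.summable
        intro v
        rcases lt_or_ge 0 (m (x, y, v)) with hv | hv
        · exact mul_le_mul_right (ENNReal.ofReal_le_ofReal (lamt_mono (hιle x v hv))) _
        · have h0 : m (x, y, v) = 0 := le_antisymm hv (hmnn _)
          rw [h0]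
          simp
      calc (∑' i, ENNReal.ofReal (r y i * lamt i))
          = ∑' i, ENNReal.ofReal (r y i) * ENNReal.ofReal (lamt i) :=
            tsum_congr (fun i => ENNReal.ofReal_mul (hrnn y hy i))
      _ ≤ ∑' i, ENNReal.ofReal (r y i) * ENNReal.ofReal (lamt (κ i)) := step1
      _ = ∑' x, ENNReal.ofReal (w (x, y) / pY y) * ENNReal.ofReal (lamt (ι x)) := step2
      _ ≤ _ := step3
    -- assembly
    have hterm : ∀ y, ENNReal.ofReal (pY y * ∑' i, r y i * lamt i) ≤
        ∑' (x : X) (v : W), ENNReal.ofReal (m (x, y, v)) * ENNReal.ofReal (lamt (ρ v)) := by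
      intro y
      rcases lt_or_ge 0 (pY y) with hy | hy
      · rw [ENNReal.ofReal_mul (hpYnn y),
          ENNReal.ofReal_tsum_of_nonneg (fun i => mul_nonneg (hrnn y hy i) (lamt_nonneg i)) (hrs y)]
        calc ENNReal.ofReal (pY y) * ∑' i, ENNReal.ofReal (r y i * lamt i)
            ≤ ENNReal.ofReal (pY y) * ((ENNReal.ofReal (pY y))⁻¹ *
              ∑' (x : X) (v : W), ENNReal.ofReal (m (x, y, v)) * ENNReal.ofReal (lamt (ρ v))) :=
              mul_le_mul_right (main y hy) _
        _ = _ := by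
              rw [← mul_assoc, ENNReal.mul_inv_cancel
                (by simp [ENNReal.ofReal_pos.2 hy, ne_of_gt (ENNReal.ofReal_pos.2 hy)])
                ENNReal.ofReal_ne_top, one_mul]
      · have h0 : pY y = 0 := le_antisymm hy (hpYnn y)
        rw [h0, zero_mul]
        simp
    have assemble : (∑' y, ENNReal.ofReal (pY y * ∑' i, r y i * lamt i)) ≤
        ∑' i, ENNReal.ofReal (s i * lamt i) := by
      calc (∑' y, ENNReal.ofReal (pY y * ∑' i, r y i * lamt i))
          ≤ ∑' (y : Y) (x : X) (v : W),
              ENNReal.ofReal (m (x, y, v)) * ENNReal.ofReal (lamt (ρ v)) :=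
            Summable.tsum_le_tsum hterm ENNReal.summable ENNReal.summable
      _ = ∑' (v : W) (y : Y) (x : X),
              ENNReal.ofReal (m (x, y, v)) * ENNReal.ofReal (lamt (ρ v)) := by
            rw [← ENNReal.tsum_comm (f := fun y v => ∑' (x : X),
              ENNReal.ofReal (m (x, y, v)) * ENNReal.ofReal (lamt (ρ v)))]
            exact tsum_congr (fun y => ENNReal.tsum_comm)
      _ = ∑' v : W, ENNReal.ofReal (q v) * ENNReal.ofReal (lamt (ρ v)) := by
            apply tsum_congr
            intro v
            have hqv : ENNReal.ofReal (q v) = ∑' (y : Y) (x : X), ENNReal.ofReal (m (x, y, v)) := by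
              have h1 : ENNReal.ofReal (q v) = ∑' z : X × Y, ENNReal.ofReal (m (z.1, z.2, v)) :=
                ENNReal.ofReal_tsum_of_nonneg (fun z => hmnn _) (hmslicev v)
              rw [h1, ENNReal.tsum_prod (f := fun a b => ENNReal.ofReal (m (a, b, v)))]
              exact ENNReal.tsum_comm
            calc (∑' (y : Y) (x : X), ENNReal.ofReal (m (x, y, v)) * ENNReal.ofReal (lamt (ρ v)))
                = ∑' y : Y, (∑' x : X, ENNReal.ofReal (m (x, y, v))) * ENNReal.ofReal (lamt (ρ v)) :=
                  tsum_congr (fun y => ENNReal.tsum_mul_right)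
            _ = (∑' (y : Y) (x : X), ENNReal.ofReal (m (x, y, v))) * ENNReal.ofReal (lamt (ρ v)) :=
                  ENNReal.tsum_mul_right
            _ = ENNReal.ofReal (q v) * ENNReal.ofReal (lamt (ρ v)) := by rw [hqv]
      _ = ∑' i, ENNReal.ofReal (s i) * ENNReal.ofReal (lamt i) := by
            refine tsum_bijOn_ennreal hρbij ?_ ?_ ?_
            · intro v hv
              simp only [Set.mem_setOf_eq] at hv
              have h0 : q v = 0 := le_antisymm (not_lt.1 hv) (hqnn v)
              rw [h0]
              simp
            · intro i hi
              simp only [Set.mem_setOf_eq] at hi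
              have h0 : s i = 0 := le_antisymm (not_lt.1 hi) (hsnn i)
              rw [h0]
              simp
            · intro v hv
              rw [hρval v hv]
      _ = ∑' i, ENNReal.ofReal (s i * lamt i) :=
            tsum_congr (fun i => (ENNReal.ofReal_mul (hsnn i)).symm)
    have hL : ENNReal.ofReal (∑' y, pY y * ∑' i, r y i * lamt i) =
        ∑' y, ENNReal.ofReal (pY y * ∑' i, r y i * lamt i) :=
      ENNReal.ofReal_tsum_of_nonneg htermnn hout
    have hR : ENNReal.ofReal (∑' i, s i * lamt i) = ∑' i, ENNReal.ofReal (s i * lamt i) :=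
      ENNReal.ofReal_tsum_of_nonneg (fun i => mul_nonneg (hsnn i) (lamt_nonneg i)) hssum
    rw [← hL, ← hR] at assemble
    exact (ENNReal.ofReal_le_ofReal_iff
      (tsum_nonneg (fun i => mul_nonneg (hsnn i) (lamt_nonneg i)))).1 assemble
  · -- PART 2 : attainment
    -- PART 2 : attainment
    obtain ⟨E, hE⟩ : ∃ E : Y → X → ℕ, E = fun y => if hy : 0 < pY y then (hEy y hy).choose else fun _ => 0 := ⟨_, rfl⟩
    have hEbij : ∀ y, ∀ hy : 0 < pY y,
        Set.BijOn (E y) {x | 0 < w (x, y) / pY y} {i | 0 < r y i} := by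
      intro y hy
      rw [hE]
      simp only [dif_pos hy]
      exact (hEy y hy).choose_spec.1
    have hEval : ∀ y, ∀ hy : 0 < pY y, ∀ x, 0 < w (x, y) / pY y →
        r y (E y x) = w (x, y) / pY y := by
      intro y hy
      rw [hE]
      simp only [dif_pos hy]
      exact (hEy y hy).choose_spec.2
    obtain ⟨m, hm⟩ : ∃ m : X × Y × ℕ → ℝ, m = fun z => if z.2.2 = E z.2.1 z.1 then w (z.1, z.2.1) else 0 := ⟨_, rfl⟩
    have hmnn : ∀ z, 0 ≤ m z := by
      intro z
      rw [hm]
      dsimp only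
      split
      · exact hwnn _
      · exact le_refl 0
    have hwpos_iff : ∀ x y, 0 < pY y → (0 < w (x, y) ↔ 0 < w (x, y) / pY y) := by
      intro x y hy
      constructor
      · intro h; exact div_pos h hy
      · intro h
        by_contra hc
        push_neg at hc
        have : w (x, y) = 0 := le_antisymm hc (hwnn _)
        rw [this] at h
        simp at h
    have hmsum : HasSum m 1 := by
      have hinj : Function.Injective (fun z : X × Y => (z.1, z.2, E z.2 z.1)) := by
        intro a b hab
        have h1 := congrArg (fun t : X × Y × ℕ => t.1) hab
        have h2 := congrArg (fun t : X × Y × ℕ => t.2.1) hab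
        simp only at h1 h2
        exact Prod.ext h1 h2
      rw [← Function.Injective.hasSum_iff hinj ?_]
      · have : (m ∘ fun z : X × Y => (z.1, z.2, E z.2 z.1)) = w := by
          funext z
          simp [hm]
        rw [this]
        exact hwsum
      · rintro ⟨x, y, i⟩ hz
        rw [hm]
        dsimp only
        rw [if_neg]
        intro hi
        exact hz ⟨(x, y), by simp [hi]⟩
    have hmarg2 : ∀ x y, w (x, y) = ∑' i, m (x, y, i) := by
      intro x y
      have : (fun i => m (x, y, i)) = fun i => if i = E y x then w (x, y) else 0 := by
        funext i
        rw [hm]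
      rw [this]; exact (tsum_ite_eq (E y x) (fun _ => w (x, y))).symm
    obtain ⟨rr, hrr⟩ : ∃ rr : Y → ℕ → ℝ, rr = fun y => if 0 < pY y then r y else fun _ => 0 := ⟨_, rfl⟩
    have hrrnn : ∀ y i, 0 ≤ rr y i := by
      intro y i
      rw [hrr]
      dsimp only
      split
      · next hy => exact hrnn y hy i
      · exact le_refl 0
    have hrranti : ∀ y, Antitone (rr y) := by
      intro y
      rw [hrr]
      dsimp only
      split
      · next hy => exact (hr y hy).1
      · exact antitone_const
    have hrrle1 : ∀ y i, rr y i ≤ 1 := by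
      intro y i
      rw [hrr]
      dsimp only
      split
      · next hy =>
        by_contra h
        push_neg at h
        have h1 : {x | (1:ℝ) < w (x, y) / pY y} = ∅ := by
          ext x
          simp only [Set.mem_setOf_eq, Set.mem_empty_iff_false, iff_false, not_lt]
          exact hple1 y x
        have h2 := (hr y hy).2 1 one_pos
        rw [h1] at h2
        simp only [Set.ncard_empty] at h2
        have h3 : 0 < {i | (1:ℝ) < r y i}.ncard :=
          Set.Nonempty.ncard_pos (hfs y hy 1 one_pos) ⟨i, h⟩
        omega
      · exact zero_le_one
    have hinner : ∀ y i, ∑' x, m (x, y, i) = pY y * rr y i := by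
      intro y i
      rcases lt_or_ge 0 (pY y) with hy | hy
      · have hrry : rr y = r y := by rw [hrr]; simp only [if_pos hy]
        rw [hrry]
        rcases lt_or_ge 0 (r y i) with hi | hi
        · obtain ⟨x₀, hx₀, hex₀⟩ := (hEbij y hy).surjOn hi
          simp only [Set.mem_setOf_eq] at hx₀ hex₀
          rw [tsum_eq_single x₀ ?_]
          · rw [hm]
            dsimp only
            rw [if_pos hex₀.symm]
            have hv := hEval y hy x₀ hx₀
            rw [hex₀] at hv
            rw [hv]
            field_simp
          · intro x hx
            rw [hm]
            dsimp only
            split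
            · next h =>
              rcases lt_or_ge 0 (w (x, y)) with hwx | hwx
              · have hx' : 0 < w (x, y) / pY y := div_pos hwx hy
                have heq : x = x₀ := (hEbij y hy).injOn hx' hx₀ (by rw [← h, hex₀])
                exact absurd heq hx
              · exact le_antisymm hwx (hwnn _)
            · rfl
        · have hi0 : r y i = 0 := le_antisymm hi (hrnn y hy i)
          have hz : ∀ x, m (x, y, i) = 0 := by
            intro x
            rw [hm]
            dsimp only
            split
            · next h =>
              rcases lt_or_ge 0 (w (x, y)) with hwx | hwx
              · have hx' : 0 < w (x, y) / pY y := div_pos hwx hy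
                have := (hEbij y hy).mapsTo hx'
                simp only [Set.mem_setOf_eq] at this
                rw [← h, hi0] at this
                exact absurd this (lt_irrefl 0)
              · exact le_antisymm hwx (hwnn _)
            · rfl
          rw [hi0, mul_zero]
          calc ∑' x, m (x, y, i) = ∑' _ : X, (0:ℝ) := tsum_congr hz
          _ = 0 := tsum_zero
      · have h0 : pY y = 0 := le_antisymm hy (hpYnn y)
        have hz : ∀ x, m (x, y, i) = 0 := by
          intro x
          rw [hm]
          dsimp only
          split
          · exact hw0 x y (not_lt.2 hy)
          · rfl
        rw [h0, zero_mul]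
        calc ∑' x, m (x, y, i) = ∑' _ : X, (0:ℝ) := tsum_congr hz
        _ = 0 := tsum_zero
    have hpYsummable : Summable pY := by
      have h := hwsum.summable.prod_symm.prod
      apply h.congr
      intro y
      rw [hpY y]
      rfl
    have hsummarg : ∀ i, Summable (fun y => pY y * rr y i) := by
      intro i
      apply Summable.of_nonneg_of_le (fun y => mul_nonneg (hpYnn y) (hrrnn y i))
        (fun y => ?_) hpYsummable
      calc pY y * rr y i ≤ pY y * 1 := mul_le_mul_of_nonneg_left (hrrle1 y i) (hpYnn y)
      _ = pY y := mul_one _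
    obtain ⟨s, hs⟩ : ∃ s : ℕ → ℝ, s = fun i => ∑' y, pY y * rr y i := ⟨_, rfl⟩
    have hmslicei : ∀ i, Summable (fun z : X × Y => m (z.1, z.2, i)) := fun i =>
      hmsum.summable.comp_injective (fun a b hab => by
        have h1 := congrArg (fun t : X × Y × ℕ => t.1) hab
        have h2 := congrArg (fun t : X × Y × ℕ => t.2.1) hab
        simp only at h1 h2
        exact Prod.ext h1 h2)
    have hqs : ∀ i : ℕ, (∑' z : X × Y, m (z.1, z.2, i)) = s i := by
      intro i
      have hsl2 : Summable (fun z : Y × X => m (z.2, z.1, i)) :=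
        (hmslicei i).comp_injective (Equiv.prodComm Y X).injective
      calc (∑' z : X × Y, m (z.1, z.2, i))
          = ∑' z : Y × X, m (z.2, z.1, i) :=
            ((Equiv.prodComm Y X).tsum_eq (fun z : X × Y => m (z.1, z.2, i))).symm
      _ = ∑' (y : Y) (x : X), m (x, y, i) := Summable.tsum_prod hsl2
      _ = ∑' y, pY y * rr y i := tsum_congr (fun y => hinner y i)
      _ = s i := by rw [hs]
    have hsanti : Antitone s := by
      intro i j hij
      rw [hs]
      dsimp only
      apply Summable.tsum_le_tsum _ (hsummarg j) (hsummarg i)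
      intro y
      exact mul_le_mul_of_nonneg_left (hrranti y hij) (hpYnn y)
    -- summability of s * lamt and the target equality, via ENNReal
    obtain ⟨F, hF⟩ : ∃ F : Y × ℕ → ℝ, F = fun p => pY p.1 * rr p.1 p.2 * lamt p.2 := ⟨_, rfl⟩
    have hFnn : ∀ p, 0 ≤ F p := by
      intro p
      rw [hF]
      exact mul_nonneg (mul_nonneg (hpYnn _) (hrrnn _ _)) (lamt_nonneg _)
    have hFy : ∀ y, (∑' i, ENNReal.ofReal (F (y, i))) =
        ENNReal.ofReal (pY y * ∑' i, r y i * lamt i) := by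
      intro y
      rcases lt_or_ge 0 (pY y) with hy | hy
      · have hrry : rr y = r y := by rw [hrr]; simp only [if_pos hy]
        have hFi : ∀ i, F (y, i) = pY y * (r y i * lamt i) := by
          intro i
          rw [hF]
          dsimp only
          rw [hrry, mul_assoc]
        have hsum2 : Summable (fun i => pY y * (r y i * lamt i)) := (hrs y).mul_left _
        calc (∑' i, ENNReal.ofReal (F (y, i)))
            = ∑' i, ENNReal.ofReal (pY y * (r y i * lamt i)) := by
              exact tsum_congr (fun i => by rw [hFi i])
        _ = ENNReal.ofReal (∑' i, pY y * (r y i * lamt i)) :=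
              (ENNReal.ofReal_tsum_of_nonneg (fun i =>
                mul_nonneg (hpYnn y) (mul_nonneg (hrnn y hy i) (lamt_nonneg i))) hsum2).symm
        _ = ENNReal.ofReal (pY y * ∑' i, r y i * lamt i) := by rw [tsum_mul_left]
      · have h0 : pY y = 0 := le_antisymm hy (hpYnn y)
        have hFi : ∀ i, F (y, i) = 0 := by
          intro i
          rw [hF]
          dsimp only
          rw [h0, zero_mul, zero_mul]
        simp [hFi, h0]
    have hFtop : (∑' p : Y × ℕ, ENNReal.ofReal (F p)) ≠ ⊤ := by
      rw [ENNReal.tsum_prod (f := fun y i => ENNReal.ofReal (F (y, i)))]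
      have : (∑' y, ∑' i, ENNReal.ofReal (F (y, i))) =
          ∑' y, ENNReal.ofReal (pY y * ∑' i, r y i * lamt i) := tsum_congr hFy
      rw [this, ← ENNReal.ofReal_tsum_of_nonneg htermnn hout]
      exact ENNReal.ofReal_ne_top
    have hFsum : Summable F := by
      have h := ENNReal.summable_toReal hFtop
      apply h.congr
      intro p
      rw [ENNReal.toReal_ofReal (hFnn p)]
    have hsFi : ∀ i, s i * lamt i = ∑' y, F (y, i) := by
      intro i
      rw [hs]
      dsimp only
      rw [← tsum_mul_right]
      exact tsum_congr (fun y => by rw [hF])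
    have hssum2 : Summable (fun i => s i * lamt i) := by
      have h := hFsum.prod_symm.prod
      apply h.congr
      intro i
      rw [hsFi i]
      exact tsum_congr (fun y => rfl)
    have heq2 : (∑' i, s i * lamt i) = ∑' y, pY y * ∑' i, r y i * lamt i := by
      have hcomm : (∑' (i : ℕ) (y : Y), F (y, i)) = ∑' (y : Y) (i : ℕ), F (y, i) :=
        Summable.tsum_comm (f := fun y i => F (y, i)) (by exact hFsum)
      calc (∑' i, s i * lamt i) = ∑' (i : ℕ) (y : Y), F (y, i) := tsum_congr hsFi
      _ = ∑' (y : Y) (i : ℕ), F (y, i) := hcomm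
      _ = ∑' y, pY y * ∑' i, r y i * lamt i := by
          apply tsum_congr
          intro y
          rcases lt_or_ge 0 (pY y) with hy | hy
          · have hrry : rr y = r y := by rw [hrr]; simp only [if_pos hy]
            have hFi : ∀ i, F (y, i) = pY y * (r y i * lamt i) := by
              intro i
              rw [hF]
              dsimp only
              rw [hrry, mul_assoc]
            calc (∑' i, F (y, i)) = ∑' i, pY y * (r y i * lamt i) := tsum_congr hFi
            _ = pY y * ∑' i, r y i * lamt i := tsum_mul_left
          · have h0 : pY y = 0 := le_antisymm hy (hpYnn y)
            have hFi : ∀ i : ℕ, F (y, i) = 0 := by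
              intro i
              rw [hF]
              dsimp only
              rw [h0, zero_mul, zero_mul]
            simp [hFi, h0]
    refine ⟨ℕ, m, s, ⟨hmnn, hmsum⟩, hmarg2, ?_, ?_, hssum2, heq2⟩
    · -- determinism
      refine ⟨fun p => Function.invFunOn (E p.1) {x | 0 < w (x, p.1) / pY p.1} p.2, ?_⟩
      intro x y i hpos
      have hcond : i = E y x ∧ 0 < w (x, y) := by
        rw [hm] at hpos
        dsimp only at hpos
        by_cases h : i = E y x
        · rw [if_pos h] at hpos
          exact ⟨h, hpos⟩
        · rw [if_neg h] at hpos
          exact absurd hpos (lt_irrefl 0)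
      obtain ⟨hi, hwx⟩ := hcond
      have hy : 0 < pY y := lt_of_lt_of_le hwx (hwle x y)
      have hx' : x ∈ {x' | 0 < w (x', y) / pY y} := div_pos hwx hy
      have hex : ∃ a ∈ {x' | 0 < w (x', y) / pY y}, E y a = i := ⟨x, hx', hi.symm⟩
      have h1 := Function.invFunOn_mem hex
      have h2 := Function.invFunOn_eq hex
      exact (hEbij y hy).injOn h1 hx' (h2.trans hi)
    · -- IsDescRearrange
      constructor
      · exact hsanti
      · intro t ht
        have : {v : ℕ | t < ∑' z : X × Y, m (z.1, z.2, v)} = {i | t < s i} := by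
          ext i
          simp only [Set.mem_setOf_eq]
          rw [hqs i]
        rw [this]
end
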